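/- arXiv:2107.00435 — 8 statements merged into one kernel-verified Lean document; each statement's English description precedes it below -/
import Mathlib

section
/- Let A be an n×n complex matrix with det A ≠ 0, let f be a polynomial with complex coefficients such that the matrix f(A) is invertible, and let ℓ be a natural number with ℓ ≥ 1. Then there exists a matrix Q ∈ ℂ^{n×n} such that Q^ℓ = f(A) and AQ = QA. -/
/-!
Work in the commutative finite-dimensional algebra `ℂ[A]`, where `f(A)` is still a unit because
non-zero-divisors of an Artinian ring are units. Modulo its nilradical such an algebra is a
product of copies of `ℂ`, so an `ℓ`-th root exists there; Newton's iteration lifts it to an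
honest `ℓ`-th root, as `X ^ ℓ - u` has unit derivative at a unit. Being an element of `ℂ[A]`,
the root commutes with `A`.
-/

open Polynomial

theorem exists_pow_eq_of_isNilpotent_pow_sub {R : Type*} [CommRing R] {ℓ : ℕ}
    (hℓ : IsUnit (ℓ : R)) {u x : R} (hu : IsUnit u) (hx : IsNilpotent (x ^ ℓ - u)) :
    ∃ r : R, r ^ ℓ = u := by
  have hxℓ : IsUnit (x ^ ℓ) := by
    simpa using hx.isUnit_add_right_of_commute hu (Commute.all _ _)
  have hxℓ' : IsUnit (x ^ (ℓ - 1)) := by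
    rcases ℓ with _ | m
    · simp
    · exact (isUnit_pow_succ_iff.mp hxℓ).pow _
  obtain ⟨r, ⟨-, hr⟩, -⟩ := existsUnique_nilpotent_sub_and_aeval_eq_zero (x := x)
    (P := X ^ ℓ - C u) (by simpa using hx) (by simpa [derivative_X_pow] using hℓ.mul hxℓ')
  exact ⟨r, sub_eq_zero.mp (by simpa using hr)⟩

theorem Subalgebra.isUnit_of_isUnit_val {k M : Type*} [Field k] [Ring M] [Algebra k M]
    [FiniteDimensional k M] (S : Subalgebra k M) {a : S} (ha : IsUnit (a : M)) : IsUnit a := by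
  have : IsArtinianRing S := isArtinian_of_tower k inferInstance
  exact IsArtinianRing.isUnit_of_mem_nonZeroDivisors
    (comap_nonZeroDivisors_le_of_injective (f := S.val) Subtype.val_injective
      ha.mem_nonZeroDivisors)

section IsAlgClosed

variable {k : Type*} [Field k] [IsAlgClosed k]

theorem exists_pow_eq_of_isAlgClosed_of_isIntegral {F : Type*} [Field F] [Algebra k F]
    [Algebra.IsIntegral k F] (a : F) {ℓ : ℕ} (hℓ : ℓ ≠ 0) : ∃ b : F, b ^ ℓ = a := by
  obtain ⟨c, rfl⟩ := (IsAlgClosed.algebraMap_bijective_of_isIntegral (k := k)).2 a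
  obtain ⟨z, hz⟩ := IsAlgClosed.exists_pow_nat_eq c (Nat.pos_of_ne_zero hℓ)
  exact ⟨algebraMap k F z, by rw [← map_pow, hz]⟩

theorem exists_isNilpotent_pow_sub {R : Type*} [CommRing R] [IsArtinianRing R] [Algebra k R]
    [Algebra.IsIntegral k R] (a : R) {ℓ : ℕ} (hℓ : ℓ ≠ 0) :
    ∃ x : R, IsNilpotent (x ^ ℓ - a) := by
  let e := IsArtinianRing.quotNilradicalEquivPi R
  have hroots (I : MaximalSpectrum R) :
      ∃ b : R ⧸ I.asIdeal, b ^ ℓ = e (Ideal.Quotient.mk _ a) I := by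
    let := Ideal.Quotient.field I.asIdeal
    exact exists_pow_eq_of_isAlgClosed_of_isIntegral (k := k) _ hℓ
  choose b hb using hroots
  obtain ⟨x, hx⟩ := Ideal.Quotient.mk_surjective (e.symm b)
  refine ⟨x, mem_nilradical.mp (Ideal.Quotient.eq_zero_iff_mem.mp ?_)⟩
  rw [map_sub, map_pow, hx, ← map_pow, show b ^ ℓ = _ from funext hb, AlgEquiv.symm_apply_apply,
    sub_self]

theorem IsUnit.exists_pow_eq {R : Type*} [CommRing R] [Algebra k R] [Module.Finite k R] {u : R}
    (hu : IsUnit u) {ℓ : ℕ} (hℓ : (ℓ : k) ≠ 0) : ∃ r : R, r ^ ℓ = u := by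
  have : IsArtinianRing R := isArtinian_of_tower k inferInstance
  obtain ⟨x, hx⟩ := exists_isNilpotent_pow_sub (k := k) (ℓ := ℓ) u
    fun h ↦ hℓ (by simp [h] : (ℓ : k) = 0)
  refine exists_pow_eq_of_isNilpotent_pow_sub ?_ hu hx
  simpa using (isUnit_iff_ne_zero.mpr hℓ).map (algebraMap k R)

end IsAlgClosed

theorem matrix_root_of_polynomial_commuting_general {n : ℕ}
    (A : Matrix (Fin n) (Fin n) ℂ)
    (f : Polynomial ℂ) (hf : IsUnit ((Polynomial.aeval A) f))
    (ℓ : ℕ) (hℓ : 1 ≤ ℓ) :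
    ∃ Q : Matrix (Fin n) (Fin n) ℂ,
      Q ^ ℓ = (Polynomial.aeval A) f ∧ A * Q = Q * A := by
  let S := Algebra.adjoin ℂ {A}
  let a : S := ⟨A, Algebra.self_mem_adjoin_singleton ℂ A⟩
  have hu : IsUnit (aeval a f) := S.isUnit_of_isUnit_val (by rwa [aeval_subalgebra_coe])
  obtain ⟨q, hq⟩ := hu.exists_pow_eq (k := ℂ) (ℓ := ℓ) (Nat.cast_ne_zero.mpr (by omega))
  refine ⟨q, ?_, congrArg Subtype.val (mul_comm a q)⟩
  simpa [aeval_subalgebra_coe] using congrArg Subtype.val hq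

/-- Proposition 2.1, existence part. Let `A` be an `n × n` complex matrix
with `det A ≠ 0`, let `f` be a polynomial with complex coefficients such that `f(A)` is
invertible, and let `ℓ ≥ 1`. Then there exists a matrix `Q` with `Q ^ ℓ = f(A)` and
`A * Q = Q * A`. -/
theorem matrix_root_of_polynomial_commuting {n : ℕ}
    (A : Matrix (Fin n) (Fin n) ℂ) (hA : A.det ≠ 0)
    (f : Polynomial ℂ) (hf : IsUnit ((Polynomial.aeval A) f))
    (ℓ : ℕ) (hℓ : 1 ≤ ℓ) :
    ∃ Q : Matrix (Fin n) (Fin n) ℂ,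
      Q ^ ℓ = (Polynomial.aeval A) f ∧ A * Q = Q * A :=
  matrix_root_of_polynomial_commuting_general A f hf ℓ hℓ
end

section
/- Let ℓ, p be natural numbers with ℓ ≥ 1 and p ≥ 1, let μ ∈ ℂ with μ ≠ 0, let ξ ∈ ℂ with ξ^ℓ = μ, and let T be a p×p complex matrix with T^p = 0. Define g(T) := Σ_{i=0}^{p−1} C(1/ℓ, i) · ξ · μ^{−i} · T^i, where C(a, i) := a(a−1)⋯(a−i+1)/i! is the generalized binomial coefficient. Then g(T)^ℓ = μ·I_p + T. -/
/-!
Writing `N = μ⁻¹ T`, the matrix `g(T)` is `ξ` times the evaluation at `N` of the degree-`(p-1)`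
truncation of the binomial series `B = (1 + X)^{1/ℓ}`. As formal power series `B ^ ℓ = 1 + X`
(Chu–Vandermonde). Since `N ^ p = 0`, evaluation at `N` only sees polynomials modulo `X ^ p`,
and truncation modulo `X ^ p` is multiplicative, so `g(T) ^ ℓ = ξ ^ ℓ (1 + N) = μ I + T`.
-/

noncomputable def genBinom (a : ℂ) (i : ℕ) : ℂ :=
  (∏ k ∈ Finset.range i, (a - (k : ℂ))) / (Nat.factorial i : ℂ)

open Polynomial
open scoped PowerSeries

lemma genBinom_eq_ringChoose (a : ℂ) (n : ℕ) : genBinom a n = Ring.choose a n := by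
  rw [Ring.choose_eq_smul, genBinom, ← aeval_eq_smeval, ← eval_map_algebraMap,
    descPochhammer_map, descPochhammer_eval_eq_prod_range, smul_eq_mul, div_eq_inv_mul]

lemma PowerSeries.binomialSeries_pow {R A : Type*} [CommRing R] [BinomialRing R] [Ring A]
    [Algebra R A] (r : R) (n : ℕ) : binomialSeries A r ^ n = binomialSeries A (n * r) := by
  induction n with
  | zero => simp
  | succ n ih => rw [pow_succ, ih, ← binomialSeries_add, Nat.cast_succ, add_one_mul]

namespace Polynomial

variable {R A : Type*} [CommRing R] [Ring A] [Algebra R A] {N : A} {p : ℕ}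

lemma aeval_trunc_coe_of_pow_eq_zero (hN : N ^ p = 0) (q : R[X]) :
    aeval N (PowerSeries.trunc p (q : R⟦X⟧)) = aeval N q := by
  obtain ⟨r, hr⟩ : X ^ p ∣ q - PowerSeries.trunc p (q : R⟦X⟧) := by
    refine X_pow_dvd_iff.mpr fun n hn => ?_
    rw [coeff_sub, PowerSeries.coeff_trunc, if_pos hn, coeff_coe, sub_self]
  have : aeval N (q - PowerSeries.trunc p (q : R⟦X⟧)) = 0 := by
    rw [hr, map_mul, map_pow, aeval_X, hN, zero_mul]
  rwa [map_sub, sub_eq_zero, eq_comm] at this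

lemma aeval_trunc_pow_of_pow_eq_zero (hN : N ^ p = 0) (f : R⟦X⟧) (n : ℕ) :
    aeval N (PowerSeries.trunc p f) ^ n = aeval N (PowerSeries.trunc p (f ^ n)) := by
  rw [← map_pow, ← aeval_trunc_coe_of_pow_eq_zero hN, coe_pow, PowerSeries.trunc_trunc_pow]

lemma aeval_trunc_eq_sum_range (f : R⟦X⟧) :
    aeval N (PowerSeries.trunc p f) = ∑ i ∈ Finset.range p, PowerSeries.coeff i f • N ^ i := by
  simp only [aeval_def, PowerSeries.eval₂_trunc_eq_sum_range, Algebra.smul_def]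

end Polynomial

theorem taylor_partial_sum_matrix_root_general {p : ℕ} (ℓ : ℕ) (hℓ : 1 ≤ ℓ)
    (μ ξ : ℂ) (hμ : μ ≠ 0) (hξ : ξ ^ ℓ = μ)
    (T : Matrix (Fin p) (Fin p) ℂ) (hT : T ^ p = 0) :
    (∑ i ∈ Finset.range p, (genBinom ((ℓ : ℂ)⁻¹) i * ξ * (μ ^ i)⁻¹) • T ^ i) ^ ℓ
      = μ • (1 : Matrix (Fin p) (Fin p) ℂ) + T := by
  set N := μ⁻¹ • T
  set B := PowerSeries.binomialSeries ℂ (ℓ : ℂ)⁻¹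
  have hN : N ^ p = 0 := by rw [_root_.smul_pow, hT, smul_zero]
  have hg : ∑ i ∈ Finset.range p, (genBinom ((ℓ : ℂ)⁻¹) i * ξ * (μ ^ i)⁻¹) • T ^ i
      = ξ • aeval N (PowerSeries.trunc p B) := by
    simp only [aeval_trunc_eq_sum_range, Finset.smul_sum, smul_smul, N, B, _root_.smul_pow,
      PowerSeries.binomialSeries_coeff, genBinom_eq_ringChoose, smul_eq_mul, mul_one]
    exact Finset.sum_congr rfl fun i _ => by rw [inv_pow]; ring_nf
  have hB : B ^ ℓ = ((1 + X : ℂ[X]) : ℂ⟦X⟧) := by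
    rw [PowerSeries.binomialSeries_pow, mul_inv_cancel₀ (Nat.cast_ne_zero.mpr (by omega)),
      ← Nat.cast_one, PowerSeries.binomialSeries_nat, pow_one, coe_add, coe_one, coe_X]
  calc _ = ξ ^ ℓ • aeval N (PowerSeries.trunc p B) ^ ℓ := by rw [hg, _root_.smul_pow]
    _ = μ • aeval N (1 + X : ℂ[X]) := by
      rw [hξ, aeval_trunc_pow_of_pow_eq_zero hN, hB, aeval_trunc_coe_of_pow_eq_zero hN]
    _ = μ • (1 : Matrix (Fin p) (Fin p) ℂ) + T := by
      rw [map_add, map_one, aeval_X, smul_add, smul_smul, mul_inv_cancel₀ hμ, one_smul]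

/-- identity (p3). For `ℓ, p ≥ 1`, `μ ≠ 0`, `ξ` an `ℓ`-th root of `μ`
and `T` a `p × p` nilpotent matrix with `T ^ p = 0`, the evaluation at `T` of the
degree-`(p-1)` Taylor partial sum
`g(λ) = Σ_{i=0}^{p-1} C(1/ℓ, i) ξ μ^{-i} λ^i` of the branch of `(μ + λ)^{1/ℓ}` taking the
value `ξ` at `λ = 0` satisfies `g(T)^ℓ = μ I_p + T`. -/
theorem taylor_partial_sum_matrix_root {p : ℕ} (hp : 1 ≤ p) (ℓ : ℕ) (hℓ : 1 ≤ ℓ)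
    (μ ξ : ℂ) (hμ : μ ≠ 0) (hξ : ξ ^ ℓ = μ)
    (T : Matrix (Fin p) (Fin p) ℂ) (hT : T ^ p = 0) :
    (∑ i ∈ Finset.range p, (genBinom ((ℓ : ℂ)⁻¹) i * ξ * (μ ^ i)⁻¹) • T ^ i) ^ ℓ
      = μ • (1 : Matrix (Fin p) (Fin p) ℂ) + T :=
  taylor_partial_sum_matrix_root_general ℓ hℓ μ ξ hμ hξ T hT
end

section
/- Assume the generalised Hamiltonian GBDT setup. If A·S(0) − S(0)·A* = i·Π(0)·j·Π(0)*, then A·S(x) − S(x)·A* = i·Π(x)·j·Π(x)* for every x ∈ ℝ. -/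
/-!
Put `D(x) = A S(x) − S(x) A* − i Π(x) j Π(x)*`; it suffices that `D′ ≡ 0`, since `D(0) = 0`.
For `Eₖ = A − cₖ` and any `M`, the matrix `X = Eₖ⁻¹ M (Eₖ*)⁻¹` satisfies
`A X − X A* = Eₖ X − X Eₖ* = M (Eₖ*)⁻¹ − Eₖ⁻¹ M`, as `Eₖ* = A* − cₖ` for real `cₖ`.
With `M = Π j Hₖ j Π*` the `k`-th summand of `A S′ − S′ A*` is thus exactly the `k`-th summand of
`i (Π′ j Π* + Π j Π′*)`, so the two contributions to `D′` cancel term by term.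
-/

open Matrix

attribute [local instance] Matrix.normedAddCommGroup Matrix.normedSpace

/-- The signature matrix `j = diag(I_{m₁}, −I_{m₂})`. -/
def Jmat (m₁ m₂ : ℕ) : Matrix (Fin m₁ ⊕ Fin m₂) (Fin m₁ ⊕ Fin m₂) ℂ :=
  Matrix.fromBlocks 1 0 0 (-1)

theorem Jmat_isHermitian (m₁ m₂ : ℕ) : (Jmat m₁ m₂).IsHermitian :=
  isHermitian_one.fromBlocks (by simp) isHermitian_one.neg

theorem HasDerivAt.matrix_mul {𝕜 α l m n : Type*} [NontriviallyNormedField 𝕜] [NormedRing α]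
    [NormedAlgebra 𝕜 α] [Fintype l] [Fintype m] [Fintype n] {f : 𝕜 → Matrix l m α}
    {g : 𝕜 → Matrix m n α} {f' : Matrix l m α} {g' : Matrix m n α} {x : 𝕜}
    (hf : HasDerivAt f f' x) (hg : HasDerivAt g g' x) :
    HasDerivAt (fun y => f y * g y) (f' * g x + f x * g') x := by
  refine hasDerivAt_pi.2 fun i => hasDerivAt_pi.2 fun j => ?_
  have hf' := fun i k => hasDerivAt_pi.1 (hasDerivAt_pi.1 hf i) k
  have hg' := fun k j => hasDerivAt_pi.1 (hasDerivAt_pi.1 hg k) j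
  simpa only [Matrix.add_apply, mul_apply, ← Finset.sum_add_distrib] using
    HasDerivAt.fun_sum (u := Finset.univ) fun k _ => (hf' i k).fun_mul (hg' k j)

theorem HasDerivAt.matrix_conjTranspose {𝕜 α m n : Type*} [NontriviallyNormedField 𝕜]
    [StarRing 𝕜] [TrivialStar 𝕜] [NormedAddCommGroup α] [NormedSpace 𝕜 α] [StarAddMonoid α]
    [StarModule 𝕜 α] [ContinuousStar α] [Fintype m] [Fintype n] {f : 𝕜 → Matrix m n α}
    {f' : Matrix m n α} {x : 𝕜} (hf : HasDerivAt f f' x) :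
    HasDerivAt (fun y => (f y)ᴴ) f'ᴴ x :=
  hasDerivAt_pi.2 fun i => hasDerivAt_pi.2 fun j =>
    (hasDerivAt_pi.1 (hasDerivAt_pi.1 hf j) i).star

section Resolvent

variable {R n m : Type*} [CommRing R] [Fintype n] [DecidableEq n]

theorem Matrix.resolvent_sandwich_commutator {A B : Matrix n n R} {c : R}
    (hA : IsUnit (A - c • 1)) (hB : IsUnit (B - c • 1)) (M : Matrix n n R) :
    A * ((A - c • 1)⁻¹ * M * (B - c • 1)⁻¹) - (A - c • 1)⁻¹ * M * (B - c • 1)⁻¹ * B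
      = M * (B - c • 1)⁻¹ - (A - c • 1)⁻¹ * M := by
  set X := (A - c • 1)⁻¹ * M * (B - c • 1)⁻¹
  have hAX : (A - c • 1) * X = M * (B - c • 1)⁻¹ := by
    simp only [X, Matrix.mul_assoc,
      mul_nonsing_inv_cancel_left _ _ ((isUnit_iff_isUnit_det _).1 hA)]
  have hXB : X * (B - c • 1) = (A - c • 1)⁻¹ * M := by
    simp only [X, nonsing_inv_mul_cancel_right _ _ ((isUnit_iff_isUnit_det _).1 hB)]
  rw [← hAX, ← hXB, Matrix.mul_sub, Matrix.sub_mul, Matrix.mul_smul, Matrix.smul_mul,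
    Matrix.mul_one, Matrix.one_mul]
  abel

theorem Matrix.resolvent_sandwich_commutator_eq_sub_conjTranspose [StarRing R] [Fintype m]
    {A : Matrix n n R} {c : R} (hc : star c = c) (hA : IsUnit (A - c • 1))
    (Q : Matrix n m R) {J H : Matrix m m R} (hJ : J.IsHermitian) (hH : H.IsHermitian) :
    A * ((A - c • 1)⁻¹ * Q * (J * H) * J * Qᴴ * (Aᴴ - c • 1)⁻¹)
        - (A - c • 1)⁻¹ * Q * (J * H) * J * Qᴴ * (Aᴴ - c • 1)⁻¹ * Aᴴ
      = Q * J * ((A - c • 1)⁻¹ * Q * (J * H))ᴴ - (A - c • 1)⁻¹ * Q * (J * H) * J * Qᴴ := by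
  have hadj : (A - c • 1)ᴴ = Aᴴ - c • 1 := by
    rw [conjTranspose_sub, conjTranspose_smul, hc, conjTranspose_one]
  have hleft : (A - c • 1)⁻¹ * Q * (J * H) * J * Qᴴ
      = (A - c • 1)⁻¹ * (Q * J * H * J * Qᴴ) := by
    simp only [Matrix.mul_assoc]
  have hright : Q * J * ((A - c • 1)⁻¹ * Q * (J * H))ᴴ
      = Q * J * H * J * Qᴴ * (Aᴴ - c • 1)⁻¹ := by
    simp only [conjTranspose_mul, conjTranspose_nonsing_inv, hadj, hJ.eq, hH.eq,
      Matrix.mul_assoc]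
  rw [hright, hleft, resolvent_sandwich_commutator hA (hadj ▸ (isUnit_conjTranspose _).2 hA)]

end Resolvent

theorem Matrix.commutator_eq_of_resolvent_sums {ι n m : Type*} [Fintype ι] [Fintype n]
    [DecidableEq n] [Fintype m] {A : Matrix n n ℂ} {c : ι → ℝ}
    (hA : ∀ k, IsUnit (A - (c k : ℂ) • 1)) (Q : Matrix n m ℂ) {J : Matrix m m ℂ}
    (hJ : J.IsHermitian) {H : ι → Matrix m m ℂ} (hH : ∀ k, (H k).IsHermitian)
    {Q' : Matrix n m ℂ} {S' : Matrix n n ℂ}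
    (hQ' : Q' = -(Complex.I • ∑ k, (A - (c k : ℂ) • 1)⁻¹ * Q * (J * H k)))
    (hS' : S' = -∑ k,
      (A - (c k : ℂ) • 1)⁻¹ * Q * (J * H k) * J * Qᴴ * (Aᴴ - (c k : ℂ) • 1)⁻¹) :
    A * S' - S' * Aᴴ = Complex.I • (Q' * J * Qᴴ + Q * J * Q'ᴴ) := by
  set T : ι → Matrix n m ℂ := fun k => (A - (c k : ℂ) • 1)⁻¹ * Q * (J * H k)
  have hT : ∀ k, A * (T k * J * Qᴴ * (Aᴴ - (c k : ℂ) • 1)⁻¹)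
      - T k * J * Qᴴ * (Aᴴ - (c k : ℂ) • 1)⁻¹ * Aᴴ = Q * J * (T k)ᴴ - T k * J * Qᴴ :=
    fun k => resolvent_sandwich_commutator_eq_sub_conjTranspose (Complex.conj_ofReal _) (hA k)
      Q hJ (hH k)
  have hQ'H : Q'ᴴ = Complex.I • ∑ k, (T k)ᴴ := by
    simp [hQ', conjTranspose_sum, T]
  calc A * S' - S' * Aᴴ
      = -∑ k, (A * (T k * J * Qᴴ * (Aᴴ - (c k : ℂ) • 1)⁻¹)
          - T k * J * Qᴴ * (Aᴴ - (c k : ℂ) • 1)⁻¹ * Aᴴ) := by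
        simp only [hS', Matrix.mul_neg, Matrix.neg_mul, Matrix.mul_sum, Matrix.sum_mul,
          Finset.sum_sub_distrib, T]
        abel
    _ = ∑ k, (T k * J * Qᴴ - Q * J * (T k)ᴴ) := by
        simp only [hT, ← Finset.sum_neg_distrib, neg_sub]
    _ = Complex.I • (Q' * J * Qᴴ + Q * J * Q'ᴴ) := by
        rw [hQ'H, hQ']
        simp only [Matrix.neg_mul, Matrix.smul_mul, Matrix.mul_smul, smul_add, smul_neg,
          smul_smul, Complex.I_mul_I, neg_smul, one_smul, neg_neg, Matrix.sum_mul, Matrix.mul_sum,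
          Finset.sum_sub_distrib]
        abel

theorem Matrix.hasDerivAt_commutator_sub_smul_mul_mul_conjTranspose {n m : Type*} [Fintype n]
    [Fintype m] (A : Matrix n n ℂ) (J : Matrix m m ℂ) (a : ℂ) {S : ℝ → Matrix n n ℂ}
    {Q : ℝ → Matrix n m ℂ} {S' : Matrix n n ℂ} {Q' : Matrix n m ℂ} {x : ℝ}
    (hS : HasDerivAt S S' x) (hQ : HasDerivAt Q Q' x) :
    HasDerivAt (fun y => A * S y - S y * Aᴴ - a • (Q y * J * (Q y)ᴴ))
      (A * S' - S' * Aᴴ - a • (Q' * J * (Q x)ᴴ + Q x * J * Q'ᴴ)) x := by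
  have hAS := (hasDerivAt_const x A).matrix_mul hS
  have hSA := hS.matrix_mul (hasDerivAt_const x Aᴴ)
  have hQJQ := (hQ.matrix_mul (hasDerivAt_const x J)).matrix_mul hQ.matrix_conjTranspose
  simp only [Matrix.zero_mul, zero_add, Matrix.mul_zero, add_zero] at hAS hSA hQJQ
  exact (hAS.fun_sub hSA).fun_sub (hQJQ.fun_const_smul a)

theorem gbdt_identity_propagation_general {m₁ m₂ n p r : ℕ}
    (c : Fin r → ℝ)
    (A : Matrix (Fin n) (Fin n) ℂ)
    (hA : ∀ k, IsUnit (A - (c k : ℂ) • (1 : Matrix (Fin n) (Fin n) ℂ)))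
    (β : Fin r → ℝ → Matrix (Fin p) (Fin m₁ ⊕ Fin m₂) ℂ)
    (P : ℝ → Matrix (Fin n) (Fin m₁ ⊕ Fin m₂) ℂ)
    (S : ℝ → Matrix (Fin n) (Fin n) ℂ)
    (hP : ∀ x : ℝ, HasDerivAt P
      (-(Complex.I • ∑ k : Fin r,
        (A - (c k : ℂ) • 1)⁻¹ * P x * (Jmat m₁ m₂ * ((β k x)ᴴ * β k x)))) x)
    (hS : ∀ x : ℝ, HasDerivAt S
      (-(∑ k : Fin r,
        (A - (c k : ℂ) • 1)⁻¹ * P x * (Jmat m₁ m₂ * ((β k x)ᴴ * β k x)) * Jmat m₁ m₂ *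
          (P x)ᴴ * (Aᴴ - (c k : ℂ) • 1)⁻¹)) x)
    (hS0 : A * S 0 - S 0 * Aᴴ = Complex.I • (P 0 * Jmat m₁ m₂ * (P 0)ᴴ)) :
    ∀ x : ℝ, A * S x - S x * Aᴴ = Complex.I • (P x * Jmat m₁ m₂ * (P x)ᴴ) := by
  set D : ℝ → Matrix (Fin n) (Fin n) ℂ :=
    fun y => A * S y - S y * Aᴴ - Complex.I • (P y * Jmat m₁ m₂ * (P y)ᴴ)
  have hD : ∀ y, HasDerivAt D 0 y := fun y => by
    have h := hasDerivAt_commutator_sub_smul_mul_mul_conjTranspose A (Jmat m₁ m₂) Complex.I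
      (hS y) (hP y)
    rwa [commutator_eq_of_resolvent_sums hA (P y) (Jmat_isHermitian m₁ m₂)
      (fun k => isHermitian_conjTranspose_mul_self (β k y)) rfl rfl, sub_self] at h
  intro x
  have hDx : D x = D 0 :=
    is_const_of_deriv_eq_zero (fun y => (hD y).differentiableAt) (fun y => (hD y).deriv) x 0
  simp only [D, hS0, sub_self, sub_eq_zero] at hDx
  exact hDx

/-- propagation of the identity (c7). In the generalised Hamiltonian
GBDT setup, if `A S(0) − S(0) A* = i Π(0) j Π(0)*`, then
`A S(x) − S(x) A* = i Π(x) j Π(x)*` for every `x ∈ ℝ`. -/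
theorem gbdt_identity_propagation {m₁ m₂ n p r : ℕ} (hm : 0 < m₁ + m₂) (hr : 1 ≤ r)
    (c : Fin r → ℝ) (hc : Function.Injective c)
    (A : Matrix (Fin n) (Fin n) ℂ)
    (hA : ∀ k, IsUnit (A - (c k : ℂ) • (1 : Matrix (Fin n) (Fin n) ℂ)))
    (β : Fin r → ℝ → Matrix (Fin p) (Fin m₁ ⊕ Fin m₂) ℂ)
    (hβ : ∀ k, Continuous (β k))
    (P : ℝ → Matrix (Fin n) (Fin m₁ ⊕ Fin m₂) ℂ)
    (S : ℝ → Matrix (Fin n) (Fin n) ℂ)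
    (hP : ∀ x : ℝ, HasDerivAt P
      (-(Complex.I • ∑ k : Fin r,
        (A - (c k : ℂ) • 1)⁻¹ * P x * (Jmat m₁ m₂ * ((β k x)ᴴ * β k x)))) x)
    (hS : ∀ x : ℝ, HasDerivAt S
      (-(∑ k : Fin r,
        (A - (c k : ℂ) • 1)⁻¹ * P x * (Jmat m₁ m₂ * ((β k x)ᴴ * β k x)) * Jmat m₁ m₂ *
          (P x)ᴴ * (Aᴴ - (c k : ℂ) • 1)⁻¹)) x)
    (hS0 : A * S 0 - S 0 * Aᴴ = Complex.I • (P 0 * Jmat m₁ m₂ * (P 0)ᴴ)) :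
    ∀ x : ℝ, A * S x - S x * Aᴴ = Complex.I • (P x * Jmat m₁ m₂ * (P x)ᴴ) :=
  gbdt_identity_propagation_general c A hA β P S hP hS hS0
end

section
/- Let A ∈ ℂ^{n×n}, let S ∈ ℂ^{n×n} be invertible, let Π ∈ ℂ^{n×m}, let j = diag(I_{m₁}, −I_{m₂}) with m = m₁ + m₂, and let c ∈ ℝ be such that A − c·Iₙ and A* − c·Iₙ are both invertible. Assume the identity A·S − S·A* = i·Π·j·Π*. Then (I_m − i·j·Π*·S⁻¹·(A − cIₙ)⁻¹·Π)·(I_m + i·j·Π*·(A* − cIₙ)⁻¹·S⁻¹·Π) = I_m. -/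
/-!
Put `B = A − c` and `B' = A* − c`; the identity becomes `B S − S B' = i Π j Π*`. Expanding
`(S B')⁻¹ − (B S)⁻¹ = (B S)⁻¹ (B S − S B') (S B')⁻¹` then shows that the two correction terms
`X = j Π* S⁻¹ B⁻¹ Π` and `Y = j Π* B'⁻¹ S⁻¹ Π` satisfy `i X Y = Y − X`, and this is exactly what
makes `(1 − i X) (1 + i Y) = 1 + i (Y − X) + X Y` collapse to `1`.
-/

open Matrix

theorem Matrix.inv_sub_inv_eq_inv_mul_sub_mul_inv {n R : Type*} [Fintype n] [DecidableEq n]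
    [CommRing R] {A B : Matrix n n R} (hA : IsUnit A) (hB : IsUnit B) :
    A⁻¹ - B⁻¹ = B⁻¹ * (B - A) * A⁻¹ := by
  rw [isUnit_iff_isUnit_det] at hA hB
  rw [Matrix.mul_sub, Matrix.sub_mul, nonsing_inv_mul _ hB, Matrix.one_mul,
    Matrix.mul_assoc, mul_nonsing_inv _ hA, Matrix.mul_one]

theorem one_sub_I_smul_mul_one_add_I_smul {R : Type*} [Ring R] [Algebra ℂ R] {X Y : R}
    (h : Complex.I • (X * Y) = Y - X) :
    (1 - Complex.I • X) * (1 + Complex.I • Y) = 1 := by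
  have hXY : X * Y = Complex.I • X - Complex.I • Y := by
    rw [← neg_sub, ← smul_sub, ← h, smul_smul, Complex.I_mul_I, neg_one_smul, neg_neg]
  rw [sub_mul, mul_add, mul_add, one_mul, mul_one, one_mul, smul_mul_smul_comm, Complex.I_mul_I,
    neg_one_smul, hXY]
  abel

/-- inverse formula (c11), cf. [SaSaR, (1.76)]. If
`A S − S A* = i Π j Π*`, `S` is invertible and `A − c Iₙ`, `A* − c Iₙ` are invertible
(`c ∈ ℝ`), then
`(I − i j Π* S⁻¹ (A − cIₙ)⁻¹ Π) (I + i j Π* (A* − cIₙ)⁻¹ S⁻¹ Π) = I`. -/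
theorem transfer_matrix_inverse_formula {m₁ m₂ n : ℕ}
    (A S : Matrix (Fin n) (Fin n) ℂ) (hS : IsUnit S)
    (P : Matrix (Fin n) (Fin m₁ ⊕ Fin m₂) ℂ) (c : ℝ)
    (hA : IsUnit (A - (c : ℂ) • (1 : Matrix (Fin n) (Fin n) ℂ)))
    (hA' : IsUnit (Aᴴ - (c : ℂ) • (1 : Matrix (Fin n) (Fin n) ℂ)))
    (hid : A * S - S * Aᴴ = Complex.I • (P * Jmat m₁ m₂ * Pᴴ)) :
    (1 - Complex.I • (Jmat m₁ m₂ * Pᴴ * S⁻¹ * (A - (c : ℂ) • 1)⁻¹ * P)) *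
      (1 + Complex.I • (Jmat m₁ m₂ * Pᴴ * (Aᴴ - (c : ℂ) • 1)⁻¹ * S⁻¹ * P)) = 1 := by
  set B := A - (c : ℂ) • (1 : Matrix (Fin n) (Fin n) ℂ)
  set B' := Aᴴ - (c : ℂ) • (1 : Matrix (Fin n) (Fin n) ℂ)
  have hshift : B * S - S * B' = Complex.I • (P * Jmat m₁ m₂ * Pᴴ) := by
    rw [← hid]
    simp only [B, B', sub_mul, mul_sub, Matrix.smul_mul, Matrix.mul_smul, Matrix.one_mul,
      Matrix.mul_one]
    abel
  have hresolvent : B'⁻¹ * S⁻¹ - S⁻¹ * B⁻¹ = S⁻¹ * B⁻¹ * (B * S - S * B') * (B'⁻¹ * S⁻¹) := by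
    simpa only [Matrix.mul_inv_rev, Matrix.mul_assoc] using
      inv_sub_inv_eq_inv_mul_sub_mul_inv (hS.mul hA') (hA.mul hS)
  apply one_sub_I_smul_mul_one_add_I_smul
  calc Complex.I • (Jmat m₁ m₂ * Pᴴ * S⁻¹ * B⁻¹ * P * (Jmat m₁ m₂ * Pᴴ * B'⁻¹ * S⁻¹ * P))
      = Jmat m₁ m₂ * Pᴴ * (S⁻¹ * B⁻¹ * (B * S - S * B') * (B'⁻¹ * S⁻¹)) * P := by
        simp only [hshift, Matrix.smul_mul, Matrix.mul_smul, Matrix.mul_assoc]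
    _ = Jmat m₁ m₂ * Pᴴ * (B'⁻¹ * S⁻¹ - S⁻¹ * B⁻¹) * P := by rw [hresolvent]
    _ = _ := by simp only [Matrix.mul_sub, Matrix.sub_mul, Matrix.mul_assoc]
end

section
/- Let A ∈ ℂ^{n×n}, let S ∈ ℂ^{n×n} be invertible with S = S*, let Π ∈ ℂ^{n×m}, let j = diag(I_{m₁}, −I_{m₂}) with m = m₁ + m₂, and let c ∈ ℝ be such that A − c·Iₙ and A* − c·Iₙ are both invertible. Assume A·S − S·A* = i·Π·j·Π*. Then the matrix w := I_m − i·j·Π*·S⁻¹·(A − cIₙ)⁻¹·Π is invertible and w⁻¹ = j·w*·j. -/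
/-!
With `M = A - c I` and `K = S⁻¹ M⁻¹`, the reality of `c` gives
`M S - S M* = A S - S A* = i Π j Π*`. Multiplying by `K` on the left and by `K* = M*⁻¹ S⁻¹`
on the right turns this into the resolvent identity `K* - K = i K Π j Π* K*`. Writing
`w = 1 - i X` with `X = j Π* K Π`, one has `j w* j = 1 + i Y` with `Y = j Π* K* Π`, and the
resolvent identity says `Y - X = i X Y`; hence `w (j w* j) = 1 + i (Y - X) + X Y = 1`.
-/

open Matrix

lemma Jmat_mul_self (m₁ m₂ : ℕ) : Jmat m₁ m₂ * Jmat m₁ m₂ = 1 := by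
  simp [Jmat, fromBlocks_multiply]

lemma Jmat_conjTranspose (m₁ m₂ : ℕ) : (Jmat m₁ m₂)ᴴ = Jmat m₁ m₂ := by
  simp [Jmat, fromBlocks_conjTranspose]

lemma sub_ofReal_smul_one_mul_sub_mul_conjTranspose {n : Type*} [Fintype n] [DecidableEq n]
    (A S : Matrix n n ℂ) (c : ℝ) :
    (A - (c : ℂ) • 1) * S - S * (A - (c : ℂ) • 1)ᴴ = A * S - S * Aᴴ := by
  simp only [conjTranspose_sub, conjTranspose_smul, conjTranspose_one, Complex.star_def,
    Complex.conj_ofReal, Matrix.sub_mul, Matrix.mul_sub, Matrix.smul_mul, Matrix.mul_smul, one_mul,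
    mul_one]
  abel

lemma nonsing_inv_mul_nonsing_inv_sub {n : Type*} [Fintype n] [DecidableEq n]
    {M N S : Matrix n n ℂ} (hM : IsUnit M.det) (hN : IsUnit N.det) (hS : IsUnit S.det) :
    N⁻¹ * S⁻¹ - S⁻¹ * M⁻¹ = S⁻¹ * M⁻¹ * (M * S - S * N) * (N⁻¹ * S⁻¹) := by
  simp only [Matrix.mul_sub, Matrix.sub_mul, Matrix.mul_assoc,
    nonsing_inv_mul_cancel_left _ _ hM, nonsing_inv_mul_cancel_left _ _ hS,
    mul_nonsing_inv_cancel_left _ _ hN, mul_nonsing_inv _ hS, mul_one]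

lemma mul_signature_conjTranspose_mul_signature_eq_one {n m : Type*} [Fintype n] [Fintype m]
    [DecidableEq m] {K : Matrix n n ℂ} {P : Matrix n m ℂ}
    {j : Matrix m m ℂ} (hjj : j * j = 1) (hjH : jᴴ = j)
    (hK : Kᴴ - K = Complex.I • (K * P * j * Pᴴ * Kᴴ)) :
    (1 - Complex.I • (j * Pᴴ * K * P)) * (j * (1 - Complex.I • (j * Pᴴ * K * P))ᴴ * j) = 1 := by
  set X := j * Pᴴ * K * P
  set Y := j * Pᴴ * Kᴴ * P
  have hXH : j * Xᴴ * j = Y := by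
    simp only [X, Y, conjTranspose_mul, conjTranspose_conjTranspose, hjH, ← Matrix.mul_assoc]
    rw [Matrix.mul_assoc _ j j, hjj, mul_one]
  have hYX : Y - X = Complex.I • (X * Y) := by
    calc Y - X = j * Pᴴ * (Kᴴ - K) * P := by simp only [Y, X, Matrix.mul_sub, Matrix.sub_mul]
      _ = Complex.I • (X * Y) := by
        rw [hK]
        simp only [X, Y, Matrix.mul_smul, Matrix.smul_mul, Matrix.mul_assoc]
  calc (1 - Complex.I • X) * (j * (1 - Complex.I • X)ᴴ * j)
      = (1 - Complex.I • X) * (1 + Complex.I • Y) := by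
        simp only [conjTranspose_sub, conjTranspose_one, conjTranspose_smul, Complex.star_def,
          Complex.conj_I, neg_smul, sub_neg_eq_add, mul_add, add_mul, mul_one, hjj, Matrix.mul_smul,
          Matrix.smul_mul, hXH]
    _ = 1 + Complex.I • (Y - X - Complex.I • (X * Y)) := by
        simp only [Matrix.sub_mul, mul_add, one_mul, mul_one, Matrix.smul_mul, Matrix.mul_smul,
          smul_sub]
        abel
    _ = 1 := by rw [hYX, sub_self, smul_zero, add_zero]

theorem transfer_matrix_j_unitary_general {m₁ m₂ n : ℕ}
    (A S : Matrix (Fin n) (Fin n) ℂ) (hS : IsUnit S) (hSh : S = Sᴴ)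
    (P : Matrix (Fin n) (Fin m₁ ⊕ Fin m₂) ℂ) (c : ℝ)
    (hA : IsUnit (A - (c : ℂ) • (1 : Matrix (Fin n) (Fin n) ℂ)))
    (hid : A * S - S * Aᴴ = Complex.I • (P * Jmat m₁ m₂ * Pᴴ))
    (w : Matrix (Fin m₁ ⊕ Fin m₂) (Fin m₁ ⊕ Fin m₂) ℂ)
    (hw : w = 1 - Complex.I • (Jmat m₁ m₂ * Pᴴ * S⁻¹ * (A - (c : ℂ) • 1)⁻¹ * P)) :
    IsUnit w ∧ w⁻¹ = Jmat m₁ m₂ * wᴴ * Jmat m₁ m₂ := by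
  set M := A - (c : ℂ) • (1 : Matrix (Fin n) (Fin n) ℂ)
  have hMd : IsUnit M.det := (isUnit_iff_isUnit_det M).mp hA
  have hSd : IsUnit S.det := (isUnit_iff_isUnit_det S).mp hS
  have hKH : (S⁻¹ * M⁻¹)ᴴ = Mᴴ⁻¹ * S⁻¹ := by
    rw [conjTranspose_mul, conjTranspose_nonsing_inv, conjTranspose_nonsing_inv, ← hSh]
  have hresolvent : (S⁻¹ * M⁻¹)ᴴ - S⁻¹ * M⁻¹ =
      Complex.I • (S⁻¹ * M⁻¹ * P * Jmat m₁ m₂ * Pᴴ * (S⁻¹ * M⁻¹)ᴴ) := by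
    rw [hKH, nonsing_inv_mul_nonsing_inv_sub hMd (by rwa [det_conjTranspose, isUnit_star]) hSd,
      sub_ofReal_smul_one_mul_sub_mul_conjTranspose, hid]
    simp only [Matrix.mul_smul, Matrix.smul_mul, Matrix.mul_assoc]
  have hinv : w * (Jmat m₁ m₂ * wᴴ * Jmat m₁ m₂) = 1 := by
    have hwK : w = 1 - Complex.I • (Jmat m₁ m₂ * Pᴴ * (S⁻¹ * M⁻¹) * P) := by
      rw [hw, ← Matrix.mul_assoc]
    rw [hwK]
    exact mul_signature_conjTranspose_mul_signature_eq_one (Jmat_mul_self m₁ m₂)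
      (Jmat_conjTranspose m₁ m₂) hresolvent
  exact ⟨IsUnit.of_mul_eq_one _ hinv, inv_eq_right_inv hinv⟩

/-- identity (c12), j-unitarity of the transfer matrix function, cf.
[SaSaR, (1.87)]. If `A S − S A* = i Π j Π*` with `S = S*` invertible, `c ∈ ℝ`, and
`A − c Iₙ`, `A* − c Iₙ` invertible, then `w := I − i j Π* S⁻¹ (A − cIₙ)⁻¹ Π` is
invertible and `w⁻¹ = j w* j`. -/
theorem transfer_matrix_j_unitary {m₁ m₂ n : ℕ}
    (A S : Matrix (Fin n) (Fin n) ℂ) (hS : IsUnit S) (hSh : S = Sᴴ)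
    (P : Matrix (Fin n) (Fin m₁ ⊕ Fin m₂) ℂ) (c : ℝ)
    (hA : IsUnit (A - (c : ℂ) • (1 : Matrix (Fin n) (Fin n) ℂ)))
    (hA' : IsUnit (Aᴴ - (c : ℂ) • (1 : Matrix (Fin n) (Fin n) ℂ)))
    (hid : A * S - S * Aᴴ = Complex.I • (P * Jmat m₁ m₂ * Pᴴ))
    (w : Matrix (Fin m₁ ⊕ Fin m₂) (Fin m₁ ⊕ Fin m₂) ℂ)
    (hw : w = 1 - Complex.I • (Jmat m₁ m₂ * Pᴴ * S⁻¹ * (A - (c : ℂ) • 1)⁻¹ * P)) :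
    IsUnit w ∧ w⁻¹ = Jmat m₁ m₂ * wᴴ * Jmat m₁ m₂ :=
  transfer_matrix_j_unitary_general A S hS hSh P c hA hid w hw
end

section
/- Let A ∈ ℂ^{n×n}, let c₁ ≠ c₂ be real with A − c₁Iₙ and A − c₂Iₙ invertible, let Q ∈ ℂ^{n×n} with Q² = (A − c₁Iₙ)⁻¹·(A − c₂Iₙ)⁻¹, and let h₁, h₂ ∈ ℂ^{n×p}. Define Φ₁(x) := e^{ixQ}h₁ + e^{−ixQ}h₂ and Φ₂(x) := −(A − c₂Iₙ)·Q·(e^{ixQ}h₁ − e^{−ixQ}h₂). Then for all x ∈ ℝ: Φ₁′(x) = −i·(A − c₂Iₙ)⁻¹·Φ₂(x) and Φ₂′(x) = −i·(A − c₁Iₙ)⁻¹·Φ₁(x). -/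
/-!
Write `E(x) = e^{ixQ}` and `Ψ(x) = E(x)h₁ − E(−x)h₂`. Since `d/dx E(±x) = ±iQ E(±x)`, one gets
`Φ₁′ = iQΨ` and `Ψ′ = iQΦ₁`, while `Φ₂ = −(A − c₂)QΨ`. The first identity is then immediate, and
the second reduces to `(A − c₂)Q² = (A − c₁)⁻¹`, which holds because `A − c₂` commutes with
`A − c₁`, hence with the inverses in `Q² = (A − c₁)⁻¹(A − c₂)⁻¹`.
-/

open Matrix

attribute [local instance] Matrix.normedAddCommGroup Matrix.normedSpace

/- `HasDerivAt` only sees the topology of the matrices, so the derivative may be computed with the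
operator norm, under which matrices form a complete normed algebra. -/
open scoped Norms.Operator in
theorem Matrix.hasDerivAt_exp_smul_const' {𝕂 m : Type*} [RCLike 𝕂] [Fintype m] [DecidableEq m]
    (A : Matrix m m 𝕂) (t : 𝕂) :
    HasDerivAt (fun u : 𝕂 => NormedSpace.exp (u • A)) (A * NormedSpace.exp (t • A)) t :=
  _root_.hasDerivAt_exp_smul_const' A t

section MatrixMul

variable {𝕜 R l m n : Type*} [NontriviallyNormedField 𝕜] [NormedRing R] [NormedAlgebra 𝕜 R]
  [Fintype l] [Fintype m] [Fintype n] {x : 𝕜}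

theorem HasDerivAt.matrix_mul_const {f : 𝕜 → Matrix l m R} {f' : Matrix l m R}
    (hf : HasDerivAt f f' x) (B : Matrix m n R) :
    HasDerivAt (fun t => f t * B) (f' * B) x :=
  -- naming `F` and `E` lets the normed instances be found before unifying with those of `hf`
  HasFDerivAt.comp_hasDerivAt (F := Matrix l m R) (E := Matrix l n R) x
    (ContinuousLinearMap.mk (mulRightLinearMap l 𝕜 B)
      (continuous_id.matrix_mul continuous_const)).hasFDerivAt hf

theorem HasDerivAt.const_matrix_mul {f : 𝕜 → Matrix m n R} {f' : Matrix m n R}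
    (hf : HasDerivAt f f' x) (B : Matrix l m R) :
    HasDerivAt (fun t => B * f t) (B * f') x :=
  HasFDerivAt.comp_hasDerivAt (F := Matrix m n R) (E := Matrix l n R) x
    (ContinuousLinearMap.mk (mulLeftLinearMap n 𝕜 B)
      (continuous_const.matrix_mul continuous_id)).hasFDerivAt hf

end MatrixMul

theorem Matrix.hasDerivAt_exp_ofReal_mul_smul {m : Type*} [Fintype m] [DecidableEq m]
    (c : ℂ) (Q : Matrix m m ℂ) (x : ℝ) :
    HasDerivAt (fun t : ℝ => NormedSpace.exp ((c * t) • Q))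
      ((c • Q) * NormedSpace.exp ((c * x) • Q)) x := by
  have h := (Matrix.hasDerivAt_exp_smul_const' (c • Q) (x : ℂ)).scomp x
    Complex.ofRealCLM.hasDerivAt
  simp only [Function.comp_def, smul_smul, mul_comm _ c, Complex.ofRealCLM_apply,
    Complex.ofReal_one, one_smul] at h
  exact h

section ExpPair

variable {m p : Type*} [Fintype m] [DecidableEq m] [Fintype p]
  (Q : Matrix m m ℂ) (h₁ h₂ : Matrix m p ℂ) (x : ℝ)

theorem hasDerivAt_exp_mul_add_exp_neg_mul :
    HasDerivAt
      (fun t : ℝ => NormedSpace.exp ((Complex.I * t) • Q) * h₁ +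
        NormedSpace.exp (-((Complex.I * t) • Q)) * h₂)
      (Complex.I • (Q * (NormedSpace.exp ((Complex.I * x) • Q) * h₁ -
        NormedSpace.exp (-((Complex.I * x) • Q)) * h₂))) x := by
  have hplus := (hasDerivAt_exp_ofReal_mul_smul Complex.I Q x).matrix_mul_const h₁
  have hminus := (hasDerivAt_exp_ofReal_mul_smul (-Complex.I) Q x).matrix_mul_const h₂
  simp only [neg_mul, neg_smul] at hminus
  refine (HasDerivAt.add (𝕜 := ℝ) (F := Matrix m p ℂ) hplus hminus).congr_deriv ?_
  simp only [smul_mul, Matrix.neg_mul, Matrix.mul_assoc, sub_eq_add_neg, Matrix.mul_add,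
    Matrix.mul_neg, smul_add, smul_neg]

theorem hasDerivAt_exp_mul_sub_exp_neg_mul :
    HasDerivAt
      (fun t : ℝ => NormedSpace.exp ((Complex.I * t) • Q) * h₁ -
        NormedSpace.exp (-((Complex.I * t) • Q)) * h₂)
      (Complex.I • (Q * (NormedSpace.exp ((Complex.I * x) • Q) * h₁ +
        NormedSpace.exp (-((Complex.I * x) • Q)) * h₂))) x := by
  simpa only [Matrix.mul_neg, sub_neg_eq_add, ← sub_eq_add_neg] using
    hasDerivAt_exp_mul_add_exp_neg_mul Q h₁ (-h₂) x

end ExpPair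

theorem Commute.sub_smul_one_sub_smul_one {R A : Type*} [CommSemiring R] [Ring A] [Algebra R A]
    (a : A) (b c : R) : Commute (a - b • 1) (a - c • 1) :=
  ((Commute.refl a).sub_right ((Commute.one_right a).smul_right c)).sub_left
    (((Commute.one_left a).smul_left b).sub_right ((Commute.one_right _).smul_right c))

/- No invertibility of `C` is needed: `(B * C)⁻¹ = C⁻¹ * B⁻¹` holds for Mathlib's
`Matrix.inv` unconditionally. -/
theorem Matrix.mul_inv_mul_inv_of_commute {m K : Type*} [Fintype m] [DecidableEq m] [CommRing K]
    {B C : Matrix m m K} (hBC : Commute B C) (hB : IsUnit B.det) :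
    B * (C⁻¹ * B⁻¹) = C⁻¹ := by
  rw [← mul_inv_rev, hBC.eq, mul_inv_rev, ← Matrix.mul_assoc, mul_nonsing_inv _ hB,
    Matrix.one_mul]

theorem explicit_eigenfunction_system_general {n p : ℕ}
    (A : Matrix (Fin n) (Fin n) ℂ) (c₁ c₂ : ℝ)
    (hA2 : IsUnit (A - (c₂ : ℂ) • (1 : Matrix (Fin n) (Fin n) ℂ)))
    (Q : Matrix (Fin n) (Fin n) ℂ)
    (hQ : Q ^ 2 = (A - (c₁ : ℂ) • 1)⁻¹ * (A - (c₂ : ℂ) • 1)⁻¹)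
    (h₁ h₂ : Matrix (Fin n) (Fin p) ℂ) :
    let Φ₁ : ℝ → Matrix (Fin n) (Fin p) ℂ := fun x =>
      NormedSpace.exp ((Complex.I * (x : ℂ)) • Q) * h₁ +
        NormedSpace.exp (-((Complex.I * (x : ℂ)) • Q)) * h₂
    let Φ₂ : ℝ → Matrix (Fin n) (Fin p) ℂ := fun x =>
      -((A - (c₂ : ℂ) • 1) * Q *
        (NormedSpace.exp ((Complex.I * (x : ℂ)) • Q) * h₁ -
          NormedSpace.exp (-((Complex.I * (x : ℂ)) • Q)) * h₂))
    ∀ x : ℝ,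
      HasDerivAt Φ₁ (-(Complex.I • ((A - (c₂ : ℂ) • 1)⁻¹ * Φ₂ x))) x ∧
      HasDerivAt Φ₂ (-(Complex.I • ((A - (c₁ : ℂ) • 1)⁻¹ * Φ₁ x))) x := by
  intro Φ₁ Φ₂ x
  have hdet : IsUnit (A - (c₂ : ℂ) • 1).det := (isUnit_iff_isUnit_det _).1 hA2
  have hQQ : (A - (c₂ : ℂ) • 1) * Q * Q = (A - (c₁ : ℂ) • 1)⁻¹ := by
    rw [Matrix.mul_assoc, ← sq, hQ,
      mul_inv_mul_inv_of_commute (Commute.sub_smul_one_sub_smul_one A _ _) hdet]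
  constructor
  · convert hasDerivAt_exp_mul_add_exp_neg_mul Q h₁ h₂ x using 1
    rw [Matrix.mul_neg, Matrix.mul_assoc, nonsing_inv_mul_cancel_left _ _ hdet, smul_neg, neg_neg]
  · have hΦ₂ := (hasDerivAt_exp_mul_sub_exp_neg_mul Q h₁ h₂ x).const_matrix_mul
      (-((A - (c₂ : ℂ) • 1) * Q))
    simp only [Matrix.neg_mul] at hΦ₂
    convert hΦ₂ using 1
    rw [Matrix.mul_smul, ← Matrix.mul_assoc, hQQ]

/-- system (c21), the key computation in the proof of Proposition 3.5.
With `Q² = (A − c₁Iₙ)⁻¹(A − c₂Iₙ)⁻¹`, `Φ₁(x) = e^{ixQ}h₁ + e^{−ixQ}h₂` and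
`Φ₂(x) = −(A − c₂Iₙ) Q (e^{ixQ}h₁ − e^{−ixQ}h₂)`, one has
`Φ₁′(x) = −i (A − c₂Iₙ)⁻¹ Φ₂(x)` and `Φ₂′(x) = −i (A − c₁Iₙ)⁻¹ Φ₁(x)`. -/
theorem explicit_eigenfunction_system {n p : ℕ}
    (A : Matrix (Fin n) (Fin n) ℂ) (c₁ c₂ : ℝ) (hc : c₁ ≠ c₂)
    (hA1 : IsUnit (A - (c₁ : ℂ) • (1 : Matrix (Fin n) (Fin n) ℂ)))
    (hA2 : IsUnit (A - (c₂ : ℂ) • (1 : Matrix (Fin n) (Fin n) ℂ)))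
    (Q : Matrix (Fin n) (Fin n) ℂ)
    (hQ : Q ^ 2 = (A - (c₁ : ℂ) • 1)⁻¹ * (A - (c₂ : ℂ) • 1)⁻¹)
    (h₁ h₂ : Matrix (Fin n) (Fin p) ℂ) :
    let Φ₁ : ℝ → Matrix (Fin n) (Fin p) ℂ := fun x =>
      NormedSpace.exp ((Complex.I * (x : ℂ)) • Q) * h₁ +
        NormedSpace.exp (-((Complex.I * (x : ℂ)) • Q)) * h₂
    let Φ₂ : ℝ → Matrix (Fin n) (Fin p) ℂ := fun x =>
      -((A - (c₂ : ℂ) • 1) * Q *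
        (NormedSpace.exp ((Complex.I * (x : ℂ)) • Q) * h₁ -
          NormedSpace.exp (-((Complex.I * (x : ℂ)) • Q)) * h₂))
    ∀ x : ℝ,
      HasDerivAt Φ₁ (-(Complex.I • ((A - (c₂ : ℂ) • 1)⁻¹ * Φ₂ x))) x ∧
      HasDerivAt Φ₂ (-(Complex.I • ((A - (c₁ : ℂ) • 1)⁻¹ * Φ₁ x))) x :=
  explicit_eigenfunction_system_general A c₁ c₂ hA2 Q hQ h₁ h₂
end

section
/- Assume the generalised Hamiltonian GBDT setup, together with A·S(0) − S(0)·A* = i·Π(0)·j·Π(0)*, S(0) = S(0)*, and S(x) invertible for all x in an interval 𝓘 containing 0; define w_A, β̃ₖ, H̃ₖ as in Theorem 3.1. Then for every x ∈ 𝓘 the function x ↦ j·Π(x)*·S(x)⁻¹ is differentiable and (j·Π(x)*·S(x)⁻¹)′ = i·Σ_{k=1}^r j·H̃ₖ(x)·j·Π(x)*·S(x)⁻¹·(A − cₖIₙ)⁻¹. -/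
open Matrix

attribute [local instance] Matrix.normedAddCommGroup Matrix.normedSpace

/-- The transfer matrix function
`w_A(x,z) = I_m − i j Π(x)* S(x)⁻¹ (A − zIₙ)⁻¹ Π(x)` (formula (c8)). -/
noncomputable def wA {m₁ m₂ n : ℕ} (A : Matrix (Fin n) (Fin n) ℂ)
    (P : ℝ → Matrix (Fin n) (Fin m₁ ⊕ Fin m₂) ℂ) (S : ℝ → Matrix (Fin n) (Fin n) ℂ)
    (x : ℝ) (z : ℂ) : Matrix (Fin m₁ ⊕ Fin m₂) (Fin m₁ ⊕ Fin m₂) ℂ :=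
  1 - Complex.I • (Jmat m₁ m₂ * (P x)ᴴ * (S x)⁻¹ * (A - z • 1)⁻¹ * P x)

/-- The transformed `β̃ₖ(x) = βₖ(x) j w_A(x,cₖ)* j` (formula (c13)). -/
noncomputable def betaTil {m₁ m₂ n p r : ℕ} (c : Fin r → ℝ)
    (A : Matrix (Fin n) (Fin n) ℂ)
    (β : Fin r → ℝ → Matrix (Fin p) (Fin m₁ ⊕ Fin m₂) ℂ)
    (P : ℝ → Matrix (Fin n) (Fin m₁ ⊕ Fin m₂) ℂ) (S : ℝ → Matrix (Fin n) (Fin n) ℂ)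
    (k : Fin r) (x : ℝ) : Matrix (Fin p) (Fin m₁ ⊕ Fin m₂) ℂ :=
  β k x * Jmat m₁ m₂ * (wA A P S x ((c k : ℂ)))ᴴ * Jmat m₁ m₂

/-- The transformed Hamiltonian `H̃ₖ(x) = β̃ₖ(x)* β̃ₖ(x)` (formula (c13)). -/
noncomputable def Htil {m₁ m₂ n p r : ℕ} (c : Fin r → ℝ)
    (A : Matrix (Fin n) (Fin n) ℂ)
    (β : Fin r → ℝ → Matrix (Fin p) (Fin m₁ ⊕ Fin m₂) ℂ)
    (P : ℝ → Matrix (Fin n) (Fin m₁ ⊕ Fin m₂) ℂ) (S : ℝ → Matrix (Fin n) (Fin n) ℂ)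
    (k : Fin r) (x : ℝ) : Matrix (Fin m₁ ⊕ Fin m₂) (Fin m₁ ⊕ Fin m₂) ℂ :=
  (betaTil c A β P S k x)ᴴ * betaTil c A β P S k x

/-!
Differentiating `j Π* S⁻¹` with the product rule and `(S⁻¹)′ = -S⁻¹ S′ S⁻¹` gives, for each `k`,
the term `wₖ j Hₖ j Π* (A* - cₖ)⁻¹ S⁻¹` with `wₖ = w_A(x, cₖ)`. Two identities hold for all `x`
because they hold at `0` and both sides have the same derivative: `S = S*` and
`A S - S A* = i Π j Π*`. Rewritten as `(A - cₖ) S - S (A - cₖ)* = i Π j Π*`, the latter yields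
`wₖ* Π* S⁻¹ (A - cₖ)⁻¹ = Π* (A* - cₖ)⁻¹ S⁻¹`; since `j H̃ₖ j = wₖ j Hₖ j wₖ*`, this turns the
`k`-th term into `j H̃ₖ j Π* S⁻¹ (A - cₖ)⁻¹`.
-/

section Calculus

variable {𝕜 α : Type*} [NontriviallyNormedField 𝕜] {ι κ τ : Type*}

theorem hasDerivAt_matrix_iff [Fintype ι] [Fintype κ] [NormedAddCommGroup α] [NormedSpace 𝕜 α]
    {F : 𝕜 → Matrix ι κ α} {F' : Matrix ι κ α} {x : 𝕜} :
    HasDerivAt F F' x ↔ ∀ i j, HasDerivAt (fun t => F t i j) (F' i j) x :=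
  hasDerivAt_pi.trans (forall_congr' fun _ => hasDerivAt_pi)

theorem HasDerivAt.matrix_mul_s15 [Fintype ι] [Fintype κ] [Fintype τ] [NormedRing α] [NormedAlgebra 𝕜 α]
    {F : 𝕜 → Matrix ι κ α} {G : 𝕜 → Matrix κ τ α}
    {F' : Matrix ι κ α} {G' : Matrix κ τ α} {x : 𝕜}
    (hF : HasDerivAt F F' x) (hG : HasDerivAt G G' x) :
    HasDerivAt (fun t => F t * G t) (F' * G x + F x * G') x := by
  rw [hasDerivAt_matrix_iff] at hF hG ⊢
  intro i j
  simp only [mul_apply, Matrix.add_apply, ← Finset.sum_add_distrib]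
  exact HasDerivAt.fun_sum fun k _ => (hF i k).fun_mul (hG k j)

theorem HasDerivAt.matrix_conjTranspose_s15 [Fintype ι] [Fintype κ] [StarRing 𝕜] [TrivialStar 𝕜]
    [NormedRing α] [StarRing α] [ContinuousStar α] [NormedAlgebra 𝕜 α] [StarModule 𝕜 α]
    {F : 𝕜 → Matrix ι κ α} {F' : Matrix ι κ α} {x : 𝕜}
    (hF : HasDerivAt F F' x) :
    HasDerivAt (fun t => (F t)ᴴ) F'ᴴ x := by
  rw [hasDerivAt_matrix_iff] at hF ⊢
  exact fun i j => (hF j i).star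

theorem HasDerivAt.matrix_inv [Fintype ι] [DecidableEq ι] [NormedField α] [NormedAlgebra 𝕜 α]
    {S : 𝕜 → Matrix ι ι α} {S' : Matrix ι ι α} {x : 𝕜}
    (hS : HasDerivAt S S' x) (hx : IsUnit (S x)) :
    HasDerivAt (fun t => (S t)⁻¹) (-((S x)⁻¹ * S' * (S x)⁻¹)) x := by
  have hdet : ContinuousAt (fun t => (S t).det) x :=
    continuous_id.matrix_det.continuousAt.comp hS.continuousAt
  have hx' : (S x).det ≠ 0 := ((isUnit_iff_isUnit_det _).1 hx).ne_zero
  have hinv : ContinuousAt (fun t => (S t)⁻¹) x := by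
    refine (continuousAt_matrix_inv _ ?_).comp hS.continuousAt
    simpa [Ring.inverse_eq_inv'] using continuousAt_inv₀ hx'
  have hslope : ∀ᶠ t in nhdsWithin x {x}ᶜ,
      -((S t)⁻¹ * slope S x t * (S x)⁻¹) = slope (fun t => (S t)⁻¹) x t := by
    filter_upwards [nhdsWithin_le_nhds (hdet.eventually_ne hx')] with t ht
    simp only [slope_def_module, Matrix.mul_smul, Matrix.smul_mul, Matrix.mul_sub, Matrix.sub_mul,
      ← smul_neg, neg_sub]
    rw [nonsing_inv_mul _ ht.isUnit, Matrix.one_mul, Matrix.mul_assoc, mul_nonsing_inv _ hx'.isUnit,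
      Matrix.mul_one]
  refine hasDerivAt_iff_tendsto_slope.2 (Filter.Tendsto.congr' hslope ?_)
  exact (((hinv.tendsto.mono_left nhdsWithin_le_nhds).mul
    (hasDerivAt_iff_tendsto_slope.1 hS)).mul_const _).neg

theorem eq_of_hasDerivAt_eq {E : Type*} [NormedAddCommGroup E] [NormedSpace ℝ E]
    {f g f' : ℝ → E} (hf : ∀ t, HasDerivAt f (f' t) t) (hg : ∀ t, HasDerivAt g (f' t) t)
    (h0 : f 0 = g 0) (t : ℝ) : f t = g t := by
  have hfg : ∀ s, HasDerivAt (f - g) 0 s := fun s => by simpa using (hf s).sub (hg s)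
  have := is_const_of_deriv_eq_zero (fun s => (hfg s).differentiableAt) (fun s => (hfg s).deriv) t 0
  rwa [Pi.sub_apply, Pi.sub_apply, h0, sub_self, sub_eq_zero] at this

end Calculus

section Algebra

variable {n m : Type*} [DecidableEq n] [Fintype m] [DecidableEq m]

theorem conjTranspose_sub_ofReal_smul_one (A : Matrix n n ℂ) (c : ℝ) :
    (A - (c : ℂ) • 1)ᴴ = Aᴴ - (c : ℂ) • 1 := by
  simp [conjTranspose_smul]

theorem conjTranspose_inv_sub_ofReal_smul_one [Fintype n] (A : Matrix n n ℂ) (c : ℝ) :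
    ((A - (c : ℂ) • 1)⁻¹)ᴴ = (Aᴴ - (c : ℂ) • 1)⁻¹ := by
  rw [conjTranspose_nonsing_inv, conjTranspose_sub_ofReal_smul_one]

theorem sub_smul_one_mul_sub_mul_conjTranspose [Fintype n] (A S : Matrix n n ℂ) (c : ℝ) :
    (A - (c : ℂ) • 1) * S - S * (A - (c : ℂ) • 1)ᴴ = A * S - S * Aᴴ := by
  rw [conjTranspose_sub_ofReal_smul_one, Matrix.sub_mul, Matrix.mul_sub, smul_mul,
    Matrix.mul_smul, Matrix.one_mul, Matrix.mul_one]
  abel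

theorem mul_resolvent_sandwich_sub [Fintype n] {A : Matrix n n ℂ} {c : ℝ}
    (hA : IsUnit (A - (c : ℂ) • 1)) (X : Matrix n n ℂ) :
    A * ((A - (c : ℂ) • 1)⁻¹ * X * (Aᴴ - (c : ℂ) • 1)⁻¹)
        - (A - (c : ℂ) • 1)⁻¹ * X * (Aᴴ - (c : ℂ) • 1)⁻¹ * Aᴴ
      = X * (Aᴴ - (c : ℂ) • 1)⁻¹ - (A - (c : ℂ) • 1)⁻¹ * X := by
  have hAh : IsUnit (Aᴴ - (c : ℂ) • 1) := by
    rw [← conjTranspose_sub_ofReal_smul_one]; exact (isUnit_conjTranspose _).2 hA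
  have hl : A * (A - (c : ℂ) • 1)⁻¹ = 1 + (c : ℂ) • (A - (c : ℂ) • 1)⁻¹ := by
    nth_rw 1 [← sub_add_cancel A ((c : ℂ) • 1)]
    rw [Matrix.add_mul, mul_nonsing_inv _ ((isUnit_iff_isUnit_det _).1 hA), smul_mul,
      Matrix.one_mul]
  have hr : (Aᴴ - (c : ℂ) • 1)⁻¹ * Aᴴ = 1 + (c : ℂ) • (Aᴴ - (c : ℂ) • 1)⁻¹ := by
    nth_rw 2 [← sub_add_cancel Aᴴ ((c : ℂ) • 1)]
    rw [Matrix.mul_add, nonsing_inv_mul _ ((isUnit_iff_isUnit_det _).1 hAh), Matrix.mul_smul,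
      Matrix.mul_one]
  rw [← Matrix.mul_assoc, ← Matrix.mul_assoc, hl, Matrix.mul_assoc _ _ Aᴴ, hr]
  simp only [Matrix.add_mul, Matrix.mul_add, Matrix.one_mul, Matrix.mul_one, smul_mul,
    Matrix.mul_smul, Matrix.mul_assoc]
  abel

theorem transfer_conjTranspose_mul [Fintype n] {B S : Matrix n n ℂ} {J : Matrix m m ℂ}
    {P : Matrix n m ℂ} (hB : IsUnit B) (hS : IsUnit S) (hSh : S.IsHermitian)
    (hJ : J.IsHermitian) (hsyl : B * S - S * Bᴴ = Complex.I • (P * J * Pᴴ)) :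
    (1 - Complex.I • (J * Pᴴ * S⁻¹ * B⁻¹ * P))ᴴ * (Pᴴ * S⁻¹ * B⁻¹) = Pᴴ * Bᴴ⁻¹ * S⁻¹ := by
  have hSd := (isUnit_iff_isUnit_det _).1 hS
  have hBd := (isUnit_iff_isUnit_det _).1 hB
  have hBhd := (isUnit_iff_isUnit_det _).1 ((isUnit_conjTranspose _).2 hB)
  have hwh : (1 - Complex.I • (J * Pᴴ * S⁻¹ * B⁻¹ * P))ᴴ
      = 1 + Complex.I • (Pᴴ * Bᴴ⁻¹ * S⁻¹ * P * J) := by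
    simp only [conjTranspose_sub, conjTranspose_one, conjTranspose_smul, conjTranspose_mul,
      conjTranspose_conjTranspose, conjTranspose_nonsing_inv, hSh.eq, hJ.eq, Complex.star_def,
      Complex.conj_I, neg_smul, sub_neg_eq_add, Matrix.mul_assoc]
  have hmid : S⁻¹ * ((B * S - S * Bᴴ) * (S⁻¹ * B⁻¹)) = S⁻¹ - Bᴴ * (S⁻¹ * B⁻¹) := by
    simp only [Matrix.sub_mul, Matrix.mul_sub, Matrix.mul_assoc, Matrix.mul_one,
      mul_nonsing_inv_cancel_left _ _ hSd, nonsing_inv_mul_cancel_left _ _ hSd,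
      mul_nonsing_inv _ hBd]
  rw [hsyl] at hmid
  rw [hwh]
  simp only [Matrix.add_mul, Matrix.one_mul, smul_mul, Matrix.mul_smul, Matrix.mul_assoc] at hmid ⊢
  rw [← Matrix.mul_smul, ← Matrix.mul_smul, hmid, Matrix.mul_sub,
    nonsing_inv_mul_cancel_left _ _ hBhd, Matrix.mul_sub]
  abel

end Algebra

section GBDT

variable {ι n m : Type*} [Fintype ι] [Fintype n] [DecidableEq n] [Fintype m]

/-- Right-hand side of the equation for `Π′`, with `Hₖ = βₖ* βₖ` replaced by arbitrary `H k`. -/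
noncomputable def gbdtDerivPi (A : Matrix n n ℂ) (c : ι → ℝ) (J : Matrix m m ℂ)
    (H : ι → Matrix m m ℂ) (P : Matrix n m ℂ) : Matrix n m ℂ :=
  -(Complex.I • ∑ k, (A - (c k : ℂ) • 1)⁻¹ * P * (J * H k))

noncomputable def gbdtDerivS (A : Matrix n n ℂ) (c : ι → ℝ) (J : Matrix m m ℂ)
    (H : ι → Matrix m m ℂ) (P : Matrix n m ℂ) : Matrix n n ℂ :=
  -(∑ k, (A - (c k : ℂ) • 1)⁻¹ * P * (J * H k) * J * Pᴴ * (Aᴴ - (c k : ℂ) • 1)⁻¹)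

variable {A : Matrix n n ℂ} {c : ι → ℝ} {J : Matrix m m ℂ} {H : ι → Matrix m m ℂ}

theorem conjTranspose_gbdtDerivPi (hJ : J.IsHermitian) (hH : ∀ k, (H k).IsHermitian)
    (P : Matrix n m ℂ) :
    (gbdtDerivPi A c J H P)ᴴ = Complex.I • ∑ k, H k * J * Pᴴ * (Aᴴ - (c k : ℂ) • 1)⁻¹ := by
  simp only [gbdtDerivPi, conjTranspose_neg, conjTranspose_smul, conjTranspose_sum,
    conjTranspose_mul, conjTranspose_inv_sub_ofReal_smul_one, hJ.eq, (hH _).eq, Complex.star_def,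
    Complex.conj_I, neg_smul, neg_neg, Matrix.mul_assoc]

theorem isHermitian_gbdtDerivS (hJ : J.IsHermitian) (hH : ∀ k, (H k).IsHermitian)
    (P : Matrix n m ℂ) : (gbdtDerivS A c J H P).IsHermitian := by
  refine IsHermitian.neg (isSelfAdjoint_sum _ fun k _ => IsHermitian.isSelfAdjoint ?_)
  have := isHermitian_mul_mul_conjTranspose ((A - (c k : ℂ) • 1)⁻¹ * P * J) (hH k)
  simpa only [conjTranspose_mul, hJ.eq, conjTranspose_inv_sub_ofReal_smul_one,
    Matrix.mul_assoc] using this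

theorem lyapunov_gbdtDeriv (hA : ∀ k, IsUnit (A - (c k : ℂ) • 1)) (hJ : J.IsHermitian)
    (hH : ∀ k, (H k).IsHermitian) (P : Matrix n m ℂ) :
    A * gbdtDerivS A c J H P - gbdtDerivS A c J H P * Aᴴ
      = Complex.I • (gbdtDerivPi A c J H P * J * Pᴴ + P * J * (gbdtDerivPi A c J H P)ᴴ) := by
  have hS : A * gbdtDerivS A c J H P - gbdtDerivS A c J H P * Aᴴ
      = ∑ k, ((A - (c k : ℂ) • 1)⁻¹ * (P * J * H k * J * Pᴴ)
        - P * J * H k * J * Pᴴ * (Aᴴ - (c k : ℂ) • 1)⁻¹) := by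
    rw [gbdtDerivS, Matrix.mul_neg, Matrix.neg_mul, Matrix.mul_sum, Matrix.sum_mul,
      sub_neg_eq_add, neg_add_eq_sub, ← Finset.sum_sub_distrib]
    refine Finset.sum_congr rfl fun k _ => ?_
    have := mul_resolvent_sandwich_sub (hA k) (P * J * H k * J * Pᴴ)
    simp only [Matrix.mul_assoc] at this ⊢
    rw [← neg_sub, this, neg_sub]
  have hPi : gbdtDerivPi A c J H P * J * Pᴴ
      = -(Complex.I • ∑ k, (A - (c k : ℂ) • 1)⁻¹ * (P * J * H k * J * Pᴴ)) := by
    simp only [gbdtDerivPi, Matrix.neg_mul, smul_mul, Matrix.sum_mul, Matrix.mul_assoc]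
  have hPih : P * J * (gbdtDerivPi A c J H P)ᴴ
      = Complex.I • ∑ k, P * J * H k * J * Pᴴ * (Aᴴ - (c k : ℂ) • 1)⁻¹ := by
    simp only [conjTranspose_gbdtDerivPi hJ hH, Matrix.mul_smul, Matrix.mul_sum, Matrix.mul_assoc]
  rw [hS, hPi, hPih, Finset.sum_sub_distrib]
  simp only [smul_add, smul_neg, smul_smul, Complex.I_mul_I, neg_one_smul, neg_neg]
  abel

theorem gbdtDeriv_mul_conjTranspose_mul_inv [DecidableEq m] (hJ : J.IsHermitian)
    (hH : ∀ k, (H k).IsHermitian) (P : Matrix n m ℂ) (Q : Matrix n n ℂ) :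
    J * (gbdtDerivPi A c J H P)ᴴ * Q + J * Pᴴ * -(Q * gbdtDerivS A c J H P * Q)
      = Complex.I • ∑ k, (1 - Complex.I • (J * Pᴴ * Q * (A - (c k : ℂ) • 1)⁻¹ * P))
          * (J * H k * J * Pᴴ * (Aᴴ - (c k : ℂ) • 1)⁻¹ * Q) := by
  rw [conjTranspose_gbdtDerivPi hJ hH, gbdtDerivS]
  simp only [Matrix.mul_neg, Matrix.neg_mul, neg_neg, Matrix.mul_sum, Matrix.sum_mul,
    Matrix.mul_smul, smul_mul, Finset.smul_sum, ← Finset.sum_add_distrib]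
  refine Finset.sum_congr rfl fun k _ => ?_
  simp only [Matrix.sub_mul, Matrix.one_mul, smul_mul, smul_sub, smul_smul, Complex.I_mul_I,
    neg_one_smul, sub_neg_eq_add, Matrix.mul_assoc]

structure IsGBDTSolution (A : Matrix n n ℂ) (c : ι → ℝ) (J : Matrix m m ℂ)
    (H : ι → ℝ → Matrix m m ℂ) (P : ℝ → Matrix n m ℂ) (S : ℝ → Matrix n n ℂ) : Prop where
  hasDerivAt_Pi : ∀ t, HasDerivAt P (gbdtDerivPi A c J (fun k => H k t) (P t)) t
  hasDerivAt_S : ∀ t, HasDerivAt S (gbdtDerivS A c J (fun k => H k t) (P t)) t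

namespace IsGBDTSolution

variable {H : ι → ℝ → Matrix m m ℂ} {P : ℝ → Matrix n m ℂ} {S : ℝ → Matrix n n ℂ}

theorem isHermitian (h : IsGBDTSolution A c J H P S) (hJ : J.IsHermitian)
    (hH : ∀ k t, (H k t).IsHermitian) (h0 : (S 0).IsHermitian) (t : ℝ) : (S t).IsHermitian :=
  eq_of_hasDerivAt_eq (fun t => (h.hasDerivAt_S t).matrix_conjTranspose_s15)
    (fun t => (h.hasDerivAt_S t).congr_deriv (isHermitian_gbdtDerivS hJ (hH · t) _).eq.symm) h0 t

theorem lyapunov (h : IsGBDTSolution A c J H P S) (hA : ∀ k, IsUnit (A - (c k : ℂ) • 1))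
    (hJ : J.IsHermitian) (hH : ∀ k t, (H k t).IsHermitian)
    (h0 : A * S 0 - S 0 * Aᴴ = Complex.I • (P 0 * J * (P 0)ᴴ)) (t : ℝ) :
    A * S t - S t * Aᴴ = Complex.I • (P t * J * (P t)ᴴ) := by
  have hf : ∀ t, HasDerivAt (fun s => A * S s - S s * Aᴴ)
      (A * gbdtDerivS A c J (H · t) (P t) - gbdtDerivS A c J (H · t) (P t) * Aᴴ) t := fun t => by
    have hS := h.hasDerivAt_S t
    have := ((hasDerivAt_const t A).matrix_mul_s15 hS).fun_sub (hS.matrix_mul_s15 (hasDerivAt_const t Aᴴ))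
    simp only [Matrix.zero_mul, zero_add, Matrix.mul_zero, add_zero] at this
    exact this
  have hg : ∀ t, HasDerivAt (fun s => Complex.I • (P s * J * (P s)ᴴ))
      (A * gbdtDerivS A c J (H · t) (P t) - gbdtDerivS A c J (H · t) (P t) * Aᴴ) t := fun t => by
    have hP := h.hasDerivAt_Pi t
    have := ((hP.matrix_mul_s15 (hasDerivAt_const t J)).matrix_mul_s15 hP.matrix_conjTranspose_s15).const_smul
      Complex.I
    simp only [Matrix.mul_zero, add_zero] at this
    exact this.congr_deriv (lyapunov_gbdtDeriv hA hJ (hH · t) (P t)).symm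
  exact eq_of_hasDerivAt_eq hf hg h0 t

theorem hasDerivAt_mul_conjTranspose_mul_inv [DecidableEq m] (h : IsGBDTSolution A c J H P S)
    (hJ : J.IsHermitian) (hH : ∀ k t, (H k t).IsHermitian) {x : ℝ} (hx : IsUnit (S x)) :
    HasDerivAt (fun t => J * (P t)ᴴ * (S t)⁻¹)
      (Complex.I • ∑ k, (1 - Complex.I • (J * (P x)ᴴ * (S x)⁻¹ * (A - (c k : ℂ) • 1)⁻¹ * P x))
          * (J * H k x * J * (P x)ᴴ * (Aᴴ - (c k : ℂ) • 1)⁻¹ * (S x)⁻¹)) x := by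
  have := ((hasDerivAt_const x J).matrix_mul_s15 (h.hasDerivAt_Pi x).matrix_conjTranspose_s15).matrix_mul_s15
    ((h.hasDerivAt_S x).matrix_inv hx)
  simp only [zero_add, Matrix.zero_mul] at this
  exact this.congr_deriv (gbdtDeriv_mul_conjTranspose_mul_inv hJ (hH · x) (P x) (S x)⁻¹)

end IsGBDTSolution

end GBDT

theorem Jmat_mul_Jmat_mul {m₁ m₂ : ℕ} {κ : Type*} (X : Matrix (Fin m₁ ⊕ Fin m₂) κ ℂ) :
    Jmat m₁ m₂ * (Jmat m₁ m₂ * X) = X := by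
  rw [← Matrix.mul_assoc]
  simp [Jmat, fromBlocks_multiply, fromBlocks_one]

theorem Jmat_mul_Htil_mul {m₁ m₂ n p r : ℕ} (c : Fin r → ℝ) (A : Matrix (Fin n) (Fin n) ℂ)
    (β : Fin r → ℝ → Matrix (Fin p) (Fin m₁ ⊕ Fin m₂) ℂ)
    (P : ℝ → Matrix (Fin n) (Fin m₁ ⊕ Fin m₂) ℂ) (S : ℝ → Matrix (Fin n) (Fin n) ℂ)
    (k : Fin r) (x : ℝ) (Y : Matrix (Fin m₁ ⊕ Fin m₂) (Fin n) ℂ) :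
    Jmat m₁ m₂ * Htil c A β P S k x * (Jmat m₁ m₂ * Y)
      = wA A P S x (c k) * (Jmat m₁ m₂ * ((β k x)ᴴ * β k x) * Jmat m₁ m₂
        * ((wA A P S x (c k))ᴴ * Y)) := by
  simp only [Htil, betaTil, conjTranspose_mul, conjTranspose_conjTranspose,
    (Jmat_isHermitian m₁ m₂).eq, Matrix.mul_assoc, Jmat_mul_Jmat_mul]

theorem Jmat_mul_Htil_mul_resolvent {m₁ m₂ n p r : ℕ} {c : Fin r → ℝ}
    {A : Matrix (Fin n) (Fin n) ℂ} {β : Fin r → ℝ → Matrix (Fin p) (Fin m₁ ⊕ Fin m₂) ℂ}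
    {P : ℝ → Matrix (Fin n) (Fin m₁ ⊕ Fin m₂) ℂ} {S : ℝ → Matrix (Fin n) (Fin n) ℂ}
    {k : Fin r} {x : ℝ} (hA : IsUnit (A - (c k : ℂ) • 1)) (hS : IsUnit (S x))
    (hSh : (S x).IsHermitian)
    (hlyap : A * S x - S x * Aᴴ = Complex.I • (P x * Jmat m₁ m₂ * (P x)ᴴ)) :
    Jmat m₁ m₂ * Htil c A β P S k x * (Jmat m₁ m₂ * (P x)ᴴ * (S x)⁻¹) * (A - (c k : ℂ) • 1)⁻¹
      = wA A P S x (c k) * (Jmat m₁ m₂ * ((β k x)ᴴ * β k x) * Jmat m₁ m₂ * (P x)ᴴ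
        * (Aᴴ - (c k : ℂ) • 1)⁻¹ * (S x)⁻¹) := by
  have hw := transfer_conjTranspose_mul hA hS hSh (Jmat_isHermitian m₁ m₂)
    ((sub_smul_one_mul_sub_mul_conjTranspose A (S x) (c k)).trans hlyap)
  rw [conjTranspose_sub_ofReal_smul_one] at hw
  calc Jmat m₁ m₂ * Htil c A β P S k x * (Jmat m₁ m₂ * (P x)ᴴ * (S x)⁻¹) * (A - (c k : ℂ) • 1)⁻¹
      = Jmat m₁ m₂ * Htil c A β P S k x
          * (Jmat m₁ m₂ * ((P x)ᴴ * (S x)⁻¹ * (A - (c k : ℂ) • 1)⁻¹)) := by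
        simp only [Matrix.mul_assoc]
    _ = _ := by
        rw [Jmat_mul_Htil_mul, wA, hw]
        simp only [Matrix.mul_assoc]

theorem gbdt_d1_equation_general {m₁ m₂ n p r : ℕ}
    (c : Fin r → ℝ)
    (A : Matrix (Fin n) (Fin n) ℂ)
    (hA : ∀ k, IsUnit (A - (c k : ℂ) • (1 : Matrix (Fin n) (Fin n) ℂ)))
    (β : Fin r → ℝ → Matrix (Fin p) (Fin m₁ ⊕ Fin m₂) ℂ)
    (P : ℝ → Matrix (Fin n) (Fin m₁ ⊕ Fin m₂) ℂ)
    (S : ℝ → Matrix (Fin n) (Fin n) ℂ)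
    (hP : ∀ x : ℝ, HasDerivAt P
      (-(Complex.I • ∑ k : Fin r,
        (A - (c k : ℂ) • 1)⁻¹ * P x * (Jmat m₁ m₂ * ((β k x)ᴴ * β k x)))) x)
    (hS : ∀ x : ℝ, HasDerivAt S
      (-(∑ k : Fin r,
        (A - (c k : ℂ) • 1)⁻¹ * P x * (Jmat m₁ m₂ * ((β k x)ᴴ * β k x)) * Jmat m₁ m₂ *
          (P x)ᴴ * (Aᴴ - (c k : ℂ) • 1)⁻¹)) x)
    (hS0 : A * S 0 - S 0 * Aᴴ = Complex.I • (P 0 * Jmat m₁ m₂ * (P 0)ᴴ))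
    (hS0h : (S 0)ᴴ = S 0)
    (𝓘 : Set ℝ) (hSinv : ∀ x ∈ 𝓘, IsUnit (S x)) :
    ∀ x ∈ 𝓘, HasDerivAt (fun t => Jmat m₁ m₂ * (P t)ᴴ * (S t)⁻¹)
      (Complex.I • ∑ k : Fin r,
        Jmat m₁ m₂ * Htil c A β P S k x * (Jmat m₁ m₂ * (P x)ᴴ * (S x)⁻¹) *
          (A - (c k : ℂ) • 1)⁻¹) x := by
  intro x hx
  have hJ := Jmat_isHermitian m₁ m₂
  have hH : ∀ k t, ((β k t)ᴴ * β k t).IsHermitian :=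
    fun k t => isHermitian_conjTranspose_mul_self _
  have h : IsGBDTSolution A c (Jmat m₁ m₂) (fun k t => (β k t)ᴴ * β k t) P S := ⟨hP, hS⟩
  refine (h.hasDerivAt_mul_conjTranspose_mul_inv hJ hH (hSinv x hx)).congr_deriv
    (congrArg _ (Finset.sum_congr rfl fun k _ => ?_))
  exact (Jmat_mul_Htil_mul_resolvent (hA k) (hSinv x hx) (h.isHermitian hJ hH hS0h x)
    (h.lyapunov hA hJ hH hS0 x)).symm

/-- equation (d1), specialization of [SaSaR, (7.61)]. Under the
hypotheses of Theorem 3.1, the function `x ↦ j Π(x)* S(x)⁻¹` is differentiable on `𝓘`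
with `(j Π(x)* S(x)⁻¹)′ = i Σₖ j H̃ₖ(x) j Π(x)* S(x)⁻¹ (A − cₖIₙ)⁻¹`. -/
theorem gbdt_d1_equation {m₁ m₂ n p r : ℕ} (hm : 0 < m₁ + m₂) (hr : 1 ≤ r)
    (c : Fin r → ℝ) (hc : Function.Injective c)
    (A : Matrix (Fin n) (Fin n) ℂ)
    (hA : ∀ k, IsUnit (A - (c k : ℂ) • (1 : Matrix (Fin n) (Fin n) ℂ)))
    (β : Fin r → ℝ → Matrix (Fin p) (Fin m₁ ⊕ Fin m₂) ℂ)
    (hβ : ∀ k, Continuous (β k))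
    (P : ℝ → Matrix (Fin n) (Fin m₁ ⊕ Fin m₂) ℂ)
    (S : ℝ → Matrix (Fin n) (Fin n) ℂ)
    (hP : ∀ x : ℝ, HasDerivAt P
      (-(Complex.I • ∑ k : Fin r,
        (A - (c k : ℂ) • 1)⁻¹ * P x * (Jmat m₁ m₂ * ((β k x)ᴴ * β k x)))) x)
    (hS : ∀ x : ℝ, HasDerivAt S
      (-(∑ k : Fin r,
        (A - (c k : ℂ) • 1)⁻¹ * P x * (Jmat m₁ m₂ * ((β k x)ᴴ * β k x)) * Jmat m₁ m₂ *
          (P x)ᴴ * (Aᴴ - (c k : ℂ) • 1)⁻¹)) x)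
    (hS0 : A * S 0 - S 0 * Aᴴ = Complex.I • (P 0 * Jmat m₁ m₂ * (P 0)ᴴ))
    (hS0h : (S 0)ᴴ = S 0)
    (𝓘 : Set ℝ) (h0 : (0 : ℝ) ∈ 𝓘) (hSinv : ∀ x ∈ 𝓘, IsUnit (S x)) :
    ∀ x ∈ 𝓘, HasDerivAt (fun t => Jmat m₁ m₂ * (P t)ᴴ * (S t)⁻¹)
      (Complex.I • ∑ k : Fin r,
        Jmat m₁ m₂ * Htil c A β P S k x * (Jmat m₁ m₂ * (P x)ᴴ * (S x)⁻¹) *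
          (A - (c k : ℂ) • 1)⁻¹) x :=
  gbdt_d1_equation_general c A hA β P S hP hS hS0 hS0h 𝓘 hSinv
end

section
/- Let m₁, m₂ ∈ ℕ, m = m₁ + m₂ > 0, j = diag(I_{m₁}, −I_{m₂}) ∈ ℂ^{m×m}, and let C ∈ ℂ^{m×m} be positive definite with C·j·C = j. Then there exists a matrix ρ ∈ ℂ^{m₁×m₂} such that I_{m₂} − ρ*·ρ is positive definite and C = diag((I_{m₁} − ρρ*)^{−1/2}, (I_{m₂} − ρ*ρ)^{−1/2}) · [[I_{m₁}, ρ], [ρ*, I_{m₂}]], where for a positive definite matrix P, P^{−1/2} denotes the inverse of the unique positive definite square root of P, diag(X, Y) denotes the block diagonal matrix with blocks X and Y, and [[I_{m₁}, ρ], [ρ*, I_{m₂}]] denotes the 2×2 block matrix with the indicated blocks. -/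
/-! Write `C = [[A, B], [Bᴴ, D]]`. The diagonal blocks of `C > 0` are positive definite, and
`C j C = j` says `A² − BBᴴ = 1`, `AB = BD`, `D² − BᴴB = 1`. Hence `ρ = A⁻¹B = BD⁻¹` satisfies
`1 − ρρᴴ = A⁻²` and `1 − ρᴴρ = D⁻²`, so `A⁻¹` and `D⁻¹` are the positive square roots, and
`C = diag(A, D) · [[1, ρ], [ρᴴ, 1]]` because `Aρ = B` and `Dρᴴ = Bᴴ`. -/

open Matrix
open scoped ComplexOrder

namespace Matrix

variable {n m R 𝕜 : Type*}

section Blocks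

variable [Fintype n] [Fintype m] [CommRing R]

theorem fromBlocks_mul_signature_mul_self [DecidableEq n] [DecidableEq m]
    (A : Matrix n n R) (B : Matrix n m R) (C : Matrix m n R) (D : Matrix m m R) :
    fromBlocks A B C D * fromBlocks 1 0 0 (-1) * fromBlocks A B C D =
      fromBlocks (A * A - B * C) (A * B - B * D) (C * A - D * C) (C * B - D * D) := by
  simp [fromBlocks_multiply, sub_eq_add_neg, add_comm]

theorem fromBlocks_mul_signature_mul_self_eq_signature_iff [DecidableEq n] [DecidableEq m]
    {A : Matrix n n R} {B : Matrix n m R} {C : Matrix m n R} {D : Matrix m m R} :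
    fromBlocks A B C D * fromBlocks 1 0 0 (-1) * fromBlocks A B C D = fromBlocks 1 0 0 (-1) ↔
      A * A - B * C = 1 ∧ A * B = B * D ∧ C * A = D * C ∧ D * D - C * B = 1 := by
  rw [fromBlocks_mul_signature_mul_self, fromBlocks_inj, sub_eq_zero, sub_eq_zero,
    ← neg_sub (D * D), neg_inj]

theorem inv_mul_eq_mul_inv_of_mul_eq [DecidableEq n] [DecidableEq m] {A : Matrix n n R}
    {B : Matrix n m R} {D : Matrix m m R} (hA : IsUnit A.det) (hD : IsUnit D.det)
    (h : A * B = B * D) : A⁻¹ * B = B * D⁻¹ := by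
  calc A⁻¹ * B = A⁻¹ * (B * D) * D⁻¹ := by
        rw [Matrix.mul_assoc, mul_nonsing_inv_cancel_right _ _ hD]
    _ = B * D⁻¹ := by rw [← h, nonsing_inv_mul_cancel_left _ _ hA]

theorem fromBlocks_eq_fromBlocks_zero_zero_mul [DecidableEq n] [DecidableEq m]
    {A : Matrix n n R} {D : Matrix m m R} (hA : IsUnit A.det) (hD : IsUnit D.det)
    (B : Matrix n m R) (C : Matrix m n R) :
    fromBlocks A B C D = fromBlocks A 0 0 D * fromBlocks 1 (A⁻¹ * B) (D⁻¹ * C) 1 := by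
  rw [fromBlocks_multiply, mul_nonsing_inv_cancel_left _ _ hA,
    mul_nonsing_inv_cancel_left _ _ hD]
  simp

variable [StarRing R]

theorem one_sub_inv_mul_mul_conjTranspose [DecidableEq n] {A : Matrix n n R}
    {B : Matrix n m R} (hA : A.IsHermitian) (hAu : IsUnit A.det) (h : A * A - B * Bᴴ = 1) :
    1 - A⁻¹ * B * (A⁻¹ * B)ᴴ = A⁻¹ * A⁻¹ := by
  have hBB : B * Bᴴ = A * A - 1 := by rw [← h]; abel
  rw [conjTranspose_mul, conjTranspose_nonsing_inv, hA.eq, Matrix.mul_assoc,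
    ← Matrix.mul_assoc B, hBB, Matrix.sub_mul, Matrix.mul_sub, Matrix.one_mul,
    mul_nonsing_inv_cancel_right _ _ hAu, nonsing_inv_mul _ hAu, sub_sub_cancel]

end Blocks

theorem IsHermitian.fromBlocks_toBlocks [InvolutiveStar R]
    {M : Matrix (n ⊕ m) (n ⊕ m) R} (hM : M.IsHermitian) :
    Matrix.fromBlocks M.toBlocks₁₁ M.toBlocks₁₂ M.toBlocks₁₂ᴴ M.toBlocks₂₂ = M := by
  rw [← Matrix.fromBlocks_toBlocks M] at hM
  rw [(isHermitian_fromBlocks_iff.mp hM).2.1, Matrix.fromBlocks_toBlocks]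

section PosDef

variable [RCLike 𝕜]

theorem PosDef.toBlocks₁₁ {M : Matrix (n ⊕ m) (n ⊕ m) 𝕜} (hM : M.PosDef) :
    M.toBlocks₁₁.PosDef :=
  hM.submatrix Sum.inl_injective

theorem PosDef.toBlocks₂₂ {M : Matrix (n ⊕ m) (n ⊕ m) 𝕜} (hM : M.PosDef) :
    M.toBlocks₂₂.PosDef :=
  hM.submatrix Sum.inr_injective

theorem PosDef.mul_self [Fintype n] [DecidableEq n] {P : Matrix n n 𝕜} (hP : P.PosDef) :
    (P * P).PosDef := by
  simpa only [hP.isHermitian.eq] using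
    PosDef.conjTranspose_mul_self P (mulVec_injective_iff_isUnit.mpr hP.isUnit)

theorem PosDef.isUnit_det [Fintype n] [DecidableEq n] {P : Matrix n n 𝕜} (hP : P.PosDef) :
    IsUnit P.det :=
  (isUnit_iff_isUnit_det P).mp hP.isUnit

end PosDef

end Matrix

theorem halmos_extension_representation_general {m₁ m₂ : ℕ}
    (C : Matrix (Fin m₁ ⊕ Fin m₂) (Fin m₁ ⊕ Fin m₂) ℂ)
    (hC : C.PosDef) (hCj : C * Jmat m₁ m₂ * C = Jmat m₁ m₂) :
    ∃ (ρ : Matrix (Fin m₁) (Fin m₂) ℂ) (D₁ : Matrix (Fin m₁) (Fin m₁) ℂ)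
      (D₂ : Matrix (Fin m₂) (Fin m₂) ℂ),
      (1 - ρᴴ * ρ).PosDef ∧
      D₁.PosDef ∧ D₁ ^ 2 = 1 - ρ * ρᴴ ∧
      D₂.PosDef ∧ D₂ ^ 2 = 1 - ρᴴ * ρ ∧
      C = Matrix.fromBlocks D₁⁻¹ 0 0 D₂⁻¹ * Matrix.fromBlocks 1 ρ ρᴴ 1 := by
  have hA := hC.toBlocks₁₁
  have hD := hC.toBlocks₂₂
  set A := C.toBlocks₁₁
  set B := C.toBlocks₁₂
  set D := C.toBlocks₂₂
  have hCblocks : fromBlocks A B Bᴴ D = C := hC.isHermitian.fromBlocks_toBlocks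
  rw [← hCblocks, Jmat, fromBlocks_mul_signature_mul_self_eq_signature_iff] at hCj
  obtain ⟨hA₂, hAB, -, hD₂⟩ := hCj
  set ρ := A⁻¹ * B
  have hρ : ρ = B * D⁻¹ := inv_mul_eq_mul_inv_of_mul_eq hA.isUnit_det hD.isUnit_det hAB
  have hρH : ρᴴ = D⁻¹ * Bᴴ := by
    rw [hρ, conjTranspose_mul, conjTranspose_nonsing_inv, hD.isHermitian.eq]
  have hρρH : 1 - ρ * ρᴴ = A⁻¹ * A⁻¹ :=
    one_sub_inv_mul_mul_conjTranspose hA.isHermitian hA.isUnit_det hA₂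
  have hρHρ : 1 - ρᴴ * ρ = D⁻¹ * D⁻¹ := by
    have := one_sub_inv_mul_mul_conjTranspose hD.isHermitian hD.isUnit_det (B := Bᴴ)
      (by rwa [conjTranspose_conjTranspose])
    rwa [← hρH, conjTranspose_conjTranspose] at this
  refine ⟨ρ, A⁻¹, D⁻¹, hρHρ ▸ hD.inv.mul_self, hA.inv, by rw [hρρH, sq], hD.inv,
    by rw [hρHρ, sq], ?_⟩
  rw [nonsing_inv_nonsing_inv _ hA.isUnit_det, nonsing_inv_nonsing_inv _ hD.isUnit_det, hρH,
    ← hCblocks]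
  exact fromBlocks_eq_fromBlocks_zero_zero_mul hA.isUnit_det hD.isUnit_det B Bᴴ

/-- Halmos extension representation of Proposition B.3. If `C > 0`
satisfies `C j C = j`, then there is `ρ ∈ ℂ^{m₁×m₂}` with `I_{m₂} − ρ*ρ > 0` such that
`C = diag((I_{m₁} − ρρ*)^{−1/2}, (I_{m₂} − ρ*ρ)^{−1/2}) · [[I_{m₁}, ρ], [ρ*, I_{m₂}]]`,
where `P^{−1/2}` is the inverse of the unique positive definite square root of `P`
(here represented by positive definite matrices `D₁, D₂` with `D₁² = I − ρρ*`,
`D₂² = I − ρ*ρ`). -/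
theorem halmos_extension_representation {m₁ m₂ : ℕ} (hm : 0 < m₁ + m₂)
    (C : Matrix (Fin m₁ ⊕ Fin m₂) (Fin m₁ ⊕ Fin m₂) ℂ)
    (hC : C.PosDef) (hCj : C * Jmat m₁ m₂ * C = Jmat m₁ m₂) :
    ∃ (ρ : Matrix (Fin m₁) (Fin m₂) ℂ) (D₁ : Matrix (Fin m₁) (Fin m₁) ℂ)
      (D₂ : Matrix (Fin m₂) (Fin m₂) ℂ),
      (1 - ρᴴ * ρ).PosDef ∧
      D₁.PosDef ∧ D₁ ^ 2 = 1 - ρ * ρᴴ ∧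
      D₂.PosDef ∧ D₂ ^ 2 = 1 - ρᴴ * ρ ∧
      C = Matrix.fromBlocks D₁⁻¹ 0 0 D₂⁻¹ * Matrix.fromBlocks 1 ρ ρᴴ 1 :=
  halmos_extension_representation_general C hC hCj
end
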